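/- arXiv:1710.07141 — 11 statements merged into one kernel-verified Lean document; each statement's English description precedes it below -/
import Mathlib

section
/- For any nonnegative integers r, t with t ≥ 1, and any nonnegative integer ℓ, one has ∑_{k=0}^{t} (-1)^k · C(r,k) · C(r-k, t-k) · (1/2)^t · [ℓ+1]^[k] · [ℓ+k+1]^[t-k] = 0, where [m]^[s] denotes the rising factorial m(m+1)···(m+s-1) with [m]^[0]=1, and the identity holds in any field of characteristic ≠ 2 (equivalently, as an identity of rational numbers). -/
open Finset

theorem alternating_sum_range_choose_of_ne_zero {R : Type*} [Ring R] {n : ℕ} (hn : n ≠ 0) :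
    ∑ k ∈ range (n + 1), (-1 : R) ^ k * n.choose k = 0 := by
  simpa using congrArg (Int.cast : ℤ → R) (Int.alternating_sum_range_choose_of_ne hn)

theorem Nat.ascFactorial_mul_ascFactorial_sub (n : ℕ) {k t : ℕ} (hk : k ≤ t) :
    n.ascFactorial k * (n + k).ascFactorial (t - k) = n.ascFactorial t := by
  rw [Nat.ascFactorial_mul_ascFactorial, Nat.add_sub_cancel' hk]

/-- After `C(r,k) C(r-k,t-k) = C(r,t) C(t,k)` and `[ℓ+1]^[k] [ℓ+k+1]^[t-k] = [ℓ+1]^[t]`, the sum is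
`C(r,t) [ℓ+1]^[t]` times the alternating sum of the binomial coefficients `C(t,k)`. -/
theorem sum_neg_one_pow_mul_choose_mul_ascFactorial_eq_zero {R : Type*} [CommRing R] {t : ℕ}
    (ht : t ≠ 0) (r ℓ : ℕ) :
    ∑ k ∈ range (t + 1), (-1 : R) ^ k * r.choose k * (r - k).choose (t - k) *
      (ℓ + 1).ascFactorial k * (ℓ + k + 1).ascFactorial (t - k) = 0 := by
  calc _ = ∑ k ∈ range (t + 1),
          (-1 : R) ^ k * t.choose k * (r.choose t * (ℓ + 1).ascFactorial t) := by
        refine sum_congr rfl fun k hk => ?_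
        have hkt : k ≤ t := Nat.lt_succ_iff.mp (mem_range.mp hk)
        have hchoose : (r.choose k : R) * (r - k).choose (t - k) = r.choose t * t.choose k := by
          rw [← Nat.cast_mul, ← Nat.cast_mul, Nat.choose_mul hkt]
        have hasc : ((ℓ + 1).ascFactorial k : R) * (ℓ + k + 1).ascFactorial (t - k) =
            (ℓ + 1).ascFactorial t := by
          rw [Nat.add_right_comm, ← Nat.cast_mul, Nat.ascFactorial_mul_ascFactorial_sub _ hkt]
        linear_combination ((-1 : R) ^ k * (ℓ + 1).ascFactorial t) * hchoose +
          ((-1 : R) ^ k * r.choose k * (r - k).choose (t - k)) * hasc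
    _ = 0 := by rw [← sum_mul, alternating_sum_range_choose_of_ne_zero ht, zero_mul]

theorem stmt0_general (r t ℓ : ℕ) (ht : 1 ≤ t) :
    ∑ k ∈ Finset.range (t + 1),
      (-1 : ℚ) ^ k * (r.choose k) * ((r - k).choose (t - k)) * (1 / 2 : ℚ) ^ t *
        ((ℓ + 1).ascFactorial k) * ((ℓ + k + 1).ascFactorial (t - k)) = 0 := by
  calc _ = (1 / 2 : ℚ) ^ t * ∑ k ∈ range (t + 1), (-1 : ℚ) ^ k * r.choose k *
          (r - k).choose (t - k) * (ℓ + 1).ascFactorial k * (ℓ + k + 1).ascFactorial (t - k) := by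
        rw [mul_sum]
        exact sum_congr rfl fun _ _ => by ring
    _ = 0 := by
      rw [sum_neg_one_pow_mul_choose_mul_ascFactorial_eq_zero (Nat.one_le_iff_ne_zero.mp ht),
        mul_zero]

theorem stmt0 (r t ℓ : ℕ) (ht : 1 ≤ t) (hrt : t ≤ r) :
    ∑ k ∈ Finset.range (t + 1),
      (-1 : ℚ) ^ k * (r.choose k) * ((r - k).choose (t - k)) * (1 / 2 : ℚ) ^ t *
        ((ℓ + 1).ascFactorial k) * ((ℓ + k + 1).ascFactorial (t - k)) = 0 :=
  stmt0_general r t ℓ ht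
end

section
/- Let k be a field of characteristic p > 2 and let S = k⟨x,y⟩/(yx − xy − (1/2)x²). Then for every integer n ≥ 1, (x+y)^n = ∑_{i=0}^{n} C(n,i) · ((i+1)!/2^i) · x^i y^{n−i} in S. -/
/-!
Induction on `i` turns `yx = xy + c x²` into `y xⁱ = xⁱ y + i c xⁱ⁺¹`, so left multiplication by
`x + y` sends `xⁱ yʲ` to `xⁱ yʲ⁺¹ + (1 + i c) xⁱ⁺¹ yʲ`. Pascal's rule then gives
`(x + y)ⁿ = ∑ C(n, i) ∏_{j<i} (1 + j c) xⁱ yⁿ⁻ⁱ`, and for `c = 1/2` the product is `(i + 1)!/2ⁱ`.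
-/

open Finset

section JordanRelation

variable {R S : Type*} [CommSemiring R] [Semiring S] [Algebra R S] {c : R} {x y : S}

def jordanCoeff (c : R) (i : ℕ) : R := ∏ j ∈ range i, (1 + j * c)

theorem mul_pow_of_mul_eq_add_smul_sq (hrel : y * x = x * y + c • x ^ 2) (i : ℕ) :
    y * x ^ i = x ^ i * y + (i * c) • x ^ (i + 1) := by
  induction i with
  | zero => simp
  | succ i ih =>
    rw [pow_succ, ← mul_assoc, ih, add_mul, mul_assoc, hrel, mul_add, smul_mul_assoc,
      mul_smul_comm, ← mul_assoc, ← pow_succ]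
    simp only [Nat.cast_succ, add_mul, one_mul, add_smul, ← pow_succ, ← pow_add]
    abel

theorem add_mul_pow_mul_of_mul_eq_add_smul_sq (hrel : y * x = x * y + c • x ^ 2) (i j : ℕ) :
    (x + y) * (x ^ i * y ^ j) = x ^ i * y ^ (j + 1) + (1 + i * c) • (x ^ (i + 1) * y ^ j) := by
  rw [add_mul, ← mul_assoc, ← pow_succ', ← mul_assoc, mul_pow_of_mul_eq_add_smul_sq hrel,
    add_mul, smul_mul_assoc, mul_assoc, ← pow_succ', add_smul, one_smul]
  abel

theorem add_pow_of_mul_eq_add_smul_sq (hrel : y * x = x * y + c • x ^ 2) (n : ℕ) :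
    (x + y) ^ n =
      ∑ ij ∈ antidiagonal n, n.choose ij.1 • jordanCoeff c ij.1 • (x ^ ij.1 * y ^ ij.2) := by
  induction n with
  | zero => simp [jordanCoeff]
  | succ n ih =>
    rw [sum_antidiagonal_choose_succ_nsmul (fun i j => jordanCoeff c i • (x ^ i * y ^ j)) n,
      pow_succ', ih, mul_sum]
    simp only [mul_smul_comm, add_mul_pow_mul_of_mul_eq_add_smul_sq hrel, smul_add,
      sum_add_distrib, jordanCoeff, prod_range_succ, mul_smul]
    congr 1
    refine sum_congr rfl fun ⟨i, j⟩ hij ↦ ?_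
    rw [n.choose_symm_of_eq_add (mem_antidiagonal.1 hij).symm]

end JordanRelation

theorem jordanCoeff_inv_two {k : Type*} [Field k] (h2 : (2 : k) ≠ 0) (i : ℕ) :
    jordanCoeff (2⁻¹ : k) i = (i + 1).factorial / 2 ^ i := by
  induction i with
  | zero => simp [jordanCoeff]
  | succ i ih =>
    rw [jordanCoeff, prod_range_succ, ← jordanCoeff, ih, Nat.factorial_succ (i + 1)]
    push_cast
    field_simp
    ring

theorem stmt5_general (k : Type*) [Field k] (p : ℕ) (hp2 : 2 < p) [CharP k p]
    (S : Type*) [Ring S] [Algebra k S] (x y : S)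
    (hrel : y * x = x * y + (2 : k)⁻¹ • x ^ 2) (n : ℕ) :
    (x + y) ^ n =
      ∑ i ∈ Finset.range (n + 1),
        (((n.choose i : k) * ((i + 1).factorial : k)) / 2 ^ i) • (x ^ i * y ^ (n - i)) := by
  have h2 : (2 : k) ≠ 0 := fun h ↦ by
    have : p ∣ 2 := (CharP.cast_eq_zero_iff k p 2).mp (mod_cast h)
    exact absurd (Nat.le_of_dvd two_pos this) (by omega)
  rw [add_pow_of_mul_eq_add_smul_sq hrel, Nat.sum_antidiagonal_eq_sum_range_succ_mk]
  refine sum_congr rfl fun i _ ↦ ?_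
  rw [jordanCoeff_inv_two h2, ← Nat.cast_smul_eq_nsmul k, smul_smul, mul_div_assoc]

/-- In any `k`-algebra with `yx = xy + (1/2)x²` (in particular in
`S = k⟨x,y⟩/(yx − xy − (1/2)x²)`), for `n ≥ 1`:
`(x+y)^n = ∑_{i=0}^n C(n,i)((i+1)!/2^i) x^i y^{n−i}`. -/
theorem stmt5 (k : Type*) [Field k] (p : ℕ) (hp : p.Prime) (hp2 : 2 < p) [CharP k p]
    (S : Type*) [Ring S] [Algebra k S] (x y : S)
    (hrel : y * x = x * y + (2 : k)⁻¹ • x ^ 2) (n : ℕ) (hn : 1 ≤ n) :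
    (x + y) ^ n =
      ∑ i ∈ Finset.range (n + 1),
        (((n.choose i : k) * ((i + 1).factorial : k)) / 2 ^ i) • (x ^ i * y ^ (n - i)) :=
  stmt5_general k p hp2 S x y hrel n
end

section
/- Let k be a field of characteristic p > 2 and S = k⟨x,y⟩/(yx − xy − (1/2)x²). Let α = −y^{p−2} + ∑_{i=1}^{p−2} (−1)^{i+1} ((i+1)!/2^{i+1}) x^i y^{p−2−i} ∈ S. Then x·α = (x+y)^{p−1} − y^{p−1} + (1/2)x·[(x+y)^{p−2} − y^{p−2}] in S. -/
/-!
From `y x = x y + c x²` one gets `y xⁱ = xⁱ y + i c xⁱ⁺¹`, hence the ordered binomial formula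
`(x + y)ᵐ = ∑ C(m, i) ∏_{l < i} (1 + l c) • xⁱ yᵐ⁻ⁱ`; for `c = 1/2` the product is `(i + 1)!/2ⁱ`.
With `n = p - 2`, adding the term `i = 0` to the sum defining `α` rewrites it as
`∑_{i ≤ n} cᵢ xⁱ yⁿ⁻ⁱ - ½ yⁿ`, so both sides become combinations of the monomials `xⁱ⁺¹ yⁿ⁻ⁱ`
minus `½ x yⁿ`. Their coefficients agree because `C(n + 1, j) = (-1)ʲ` in characteristic `n + 2` and
`(n + 1) C(n, i) = (i + 1) C(n + 1, i + 1)` with `n + 2 = 0`.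
-/

open Finset

section Jordan

variable {R S : Type*} [CommSemiring R] [Semiring S] [Algebra R S] {c : R} {x y : S}

theorem jordan_mul_pow (h : y * x = x * y + c • x ^ 2) (i : ℕ) :
    y * x ^ i = x ^ i * y + (i * c) • x ^ (i + 1) := by
  induction i with
  | zero => simp
  | succ i ih =>
    calc y * x ^ (i + 1) = x ^ i * (y * x) + (i * c) • x ^ (i + 2) := by
          rw [pow_succ, ← mul_assoc, ih, add_mul, mul_assoc, smul_mul_assoc, ← pow_succ]
      _ = x ^ (i + 1) * y + ((i + 1 : ℕ) * c) • x ^ (i + 2) := by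
          rw [h, mul_add, mul_smul_comm, ← mul_assoc, ← pow_succ, ← pow_add, add_assoc, ← add_smul]
          push_cast
          ring_nf

theorem jordan_add_mul_smul_monomial (h : y * x = x * y + c • x ^ 2) (i j : ℕ) :
    (x + y) * ((∏ l ∈ range i, (1 + l * c)) • (x ^ i * y ^ j)) =
      (∏ l ∈ range i, (1 + l * c)) • (x ^ i * y ^ (j + 1)) +
        (∏ l ∈ range (i + 1), (1 + l * c)) • (x ^ (i + 1) * y ^ j) := by
  have hmon : (x + y) * (x ^ i * y ^ j) =
      x ^ i * y ^ (j + 1) + (1 + i * c) • (x ^ (i + 1) * y ^ j) := by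
    rw [add_mul, ← mul_assoc, ← mul_assoc, jordan_mul_pow h, ← pow_succ', add_mul, mul_assoc,
      ← pow_succ', smul_mul_assoc, add_smul, one_smul]
    abel
  rw [mul_smul_comm, hmon, smul_add, smul_smul, prod_range_succ]

theorem jordan_add_pow (h : y * x = x * y + c • x ^ 2) (m : ℕ) :
    (x + y) ^ m = ∑ ij ∈ antidiagonal m,
      m.choose ij.1 • (∏ l ∈ range ij.1, (1 + l * c)) • (x ^ ij.1 * y ^ ij.2) := by
  induction m with
  | zero => simp
  | succ m ih =>
    rw [sum_antidiagonal_choose_succ_nsmul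
      (fun i j => (∏ l ∈ range i, (1 + l * c)) • (x ^ i * y ^ j)), ← sum_add_distrib,
      pow_succ', ih, mul_sum]
    refine sum_congr rfl fun ij hij => ?_
    have hsymm := Nat.choose_symm_of_eq_add (mem_antidiagonal.1 hij).symm
    rw [hsymm, mul_smul_comm, jordan_add_mul_smul_monomial h, smul_add, ← hsymm]

end Jordan

section HalfJordan

variable {k S : Type*} [Field k] [Semiring S] [Algebra k S] {x y : S}

theorem prod_range_one_add_mul_half (h2 : (2 : k) ≠ 0) (i : ℕ) :
    ∏ l ∈ range i, (1 + l * 2⁻¹ : k) = (i + 1).factorial / 2 ^ i := by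
  induction i with
  | zero => simp
  | succ i ih =>
    rw [prod_range_succ, ih, Nat.factorial_succ (i + 1), Nat.cast_mul, pow_succ]
    field_simp
    push_cast
    ring

theorem jordan_half_add_pow (h2 : (2 : k) ≠ 0) (h : y * x = x * y + (2 : k)⁻¹ • x ^ 2) (m : ℕ) :
    (x + y) ^ m = ∑ i ∈ range (m + 1),
      ((m.choose i : k) * (i + 1).factorial / 2 ^ i) • (x ^ i * y ^ (m - i)) := by
  rw [jordan_add_pow h, Nat.sum_antidiagonal_eq_sum_range_succ_mk]
  refine sum_congr rfl fun i _ => ?_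
  rw [prod_range_one_add_mul_half h2, ← Nat.cast_smul_eq_nsmul k, smul_smul, mul_div_assoc]

theorem jordan_half_mul_add_pow (h2 : (2 : k) ≠ 0) (h : y * x = x * y + (2 : k)⁻¹ • x ^ 2) (m : ℕ) :
    x * (x + y) ^ m = ∑ i ∈ range (m + 1),
      ((m.choose i : k) * (i + 1).factorial / 2 ^ i) • (x ^ (i + 1) * y ^ (m - i)) := by
  simp only [jordan_half_add_pow h2 h, mul_sum, mul_smul_comm, ← mul_assoc, ← pow_succ']

end HalfJordan

theorem jordan_half_add_pow_succ_sub_pow {k S : Type*} [Field k] [Ring S] [Algebra k S]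
    {x y : S} (h2 : (2 : k) ≠ 0) (h : y * x = x * y + (2 : k)⁻¹ • x ^ 2) (m : ℕ) :
    (x + y) ^ (m + 1) - y ^ (m + 1) = ∑ i ∈ range (m + 1),
      (((m + 1).choose (i + 1) : k) * (i + 2).factorial / 2 ^ (i + 1)) •
        (x ^ (i + 1) * y ^ (m - i)) := by
  rw [jordan_half_add_pow h2 h, sum_range_succ', sub_eq_iff_eq_add]
  simp

theorem Nat.Prime.cast_choose_pred {R : Type*} [Ring R] {p : ℕ} (hp : p.Prime) [CharP R p]
    {j : ℕ} (hj : j < p) : ((p - 1).choose j : R) = (-1) ^ j := by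
  induction j with
  | zero => simp
  | succ j ih =>
    have hpascal : p.choose (j + 1) = (p - 1).choose j + (p - 1).choose (j + 1) := by
      obtain ⟨q, rfl⟩ : ∃ q, p = q + 1 := ⟨p - 1, by omega⟩
      simp [Nat.choose_succ_succ]
    have hzero : (p.choose (j + 1) : R) = 0 :=
      (CharP.cast_eq_zero_iff R p _).2 (hp.dvd_choose_self j.succ_ne_zero hj)
    rw [hpascal, Nat.cast_add, ih (by omega)] at hzero
    rw [pow_succ, mul_neg_one, eq_neg_of_add_eq_zero_right hzero]

theorem alpha_coeff_eq {k : Type*} [Field k] {n : ℕ} (hp : (n + 2).Prime) [CharP k (n + 2)]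
    {i : ℕ} (hi : i ≤ n) :
    ((n + 1).choose (i + 1) : k) * (i + 2).factorial / 2 ^ (i + 1) +
        2⁻¹ * ((n.choose i : k) * (i + 1).factorial / 2 ^ i) =
      (-1) ^ (i + 1) * (i + 1).factorial / 2 ^ (i + 1) := by
  have hsign : ((n + 1).choose (i + 1) : k) = (-1) ^ (i + 1) := hp.cast_choose_pred (by omega)
  have hsucc : ((n : k) + 1) * n.choose i = (n + 1).choose (i + 1) * ((i : k) + 1) := by
    exact_mod_cast congrArg (Nat.cast : ℕ → k) (Nat.add_one_mul_choose_eq n i)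
  have hchar : (n : k) + 2 = 0 := by exact_mod_cast CharP.cast_eq_zero k (n + 2)
  rw [Nat.factorial_succ (i + 1)]
  push_cast
  linear_combination ((i + 1).factorial / 2 ^ (i + 1) : k) * (hsign - hsucc + n.choose i * hchar)

/-- Lemma on α, part (a): `x·α = (x+y)^{p−1} − y^{p−1} + (1/2)x[(x+y)^{p−2} − y^{p−2}]`. -/
theorem stmt6 (k : Type*) [Field k] (p : ℕ) (hp : p.Prime) (hp2 : 2 < p) [CharP k p]
    (S : Type*) [Ring S] [Algebra k S] (x y : S)
    (hrel : y * x = x * y + (2 : k)⁻¹ • x ^ 2) :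
    x * (-(y ^ (p - 2)) +
        ∑ i ∈ Finset.Icc 1 (p - 2),
          (((-1 : k) ^ (i + 1) * ((i + 1).factorial : k)) / 2 ^ (i + 1)) •
            (x ^ i * y ^ (p - 2 - i))) =
      (x + y) ^ (p - 1) - y ^ (p - 1) +
        (2 : k)⁻¹ • (x * ((x + y) ^ (p - 2) - y ^ (p - 2))) := by
  have h2 : (2 : k) ≠ 0 := Ring.two_ne_zero (by rw [ringChar.eq k p]; omega)
  obtain ⟨n, rfl⟩ : ∃ n, p = n + 2 := ⟨p - 2, by omega⟩
  rw [Nat.add_sub_cancel, show n + 2 - 1 = n + 1 by omega]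
  set c : ℕ → k := fun i => (-1) ^ (i + 1) * (i + 1).factorial / 2 ^ (i + 1)
  have hα : -(y ^ n) + ∑ i ∈ Icc 1 n, c i • (x ^ i * y ^ (n - i)) =
      ∑ i ∈ range (n + 1), c i • (x ^ i * y ^ (n - i)) - (2 : k)⁻¹ • y ^ n := by
    rw [range_eq_Ico, sum_eq_sum_Ico_succ_bot n.succ_pos, zero_add, Nat.succ_eq_add_one,
      Ico_add_one_right_eq_Icc]
    have hc0 : c 0 = -2⁻¹ := by norm_num [c, neg_div]
    have hhalves : (2 : k)⁻¹ + 2⁻¹ = 1 := by rw [← two_mul, mul_inv_cancel₀ h2]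
    rw [hc0, pow_zero, one_mul, Nat.sub_zero]
    linear_combination (norm := module) hhalves • y ^ n
  rw [hα, mul_sub, mul_sum, mul_sub, jordan_half_add_pow_succ_sub_pow h2 hrel,
    jordan_half_mul_add_pow h2 hrel, smul_sub, smul_sum, add_sub_assoc', ← sum_add_distrib]
  simp only [mul_smul_comm, ← mul_assoc, ← pow_succ']
  congr 1
  refine sum_congr rfl fun i hi => ?_
  rw [smul_smul, ← add_smul, alpha_coeff_eq hp (Nat.lt_succ_iff.1 (mem_range.1 hi))]
end

section
/- Let k be a field of characteristic p > 2 and S = k⟨x,y⟩/(yx − xy − (1/2)x²). With α = −y^{p−2} + ∑_{i=1}^{p−2} (−1)^{i+1}((i+1)!/2^{i+1}) x^i y^{p−2−i}, one has (x+y)·α = −y^{p−1} − (1/2)x·y^{p−2} in S. -/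
/-! From `y x = x y + a x²` one gets `y xⁱ = xⁱ y + i a xⁱ⁺¹`, so left multiplication by `x + y`
sends `xⁱ yʲ` to `xⁱ yʲ⁺¹ + (1 + i a) xⁱ⁺¹ yʲ`. With `a = 1/2` the coefficients
`cᵢ = (-1)ⁱ⁺¹ (i+1)! / 2ⁱ⁺¹` of `α` satisfy `cᵢ₊₁ = -(1 + i/2) cᵢ`, so `(x + y) ∑_{i ≥ 1} cᵢ xⁱ yⁿ⁻ⁱ`
telescopes to `c₁ x yⁿ - cₙ₊₁ xⁿ⁺¹` with `n = p - 2`. Here `c₁ = 1/2`, and `cₙ₊₁ = 0` because its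
numerator is `p!`. -/

open Finset

section SkewRelation

variable {R S : Type*} [CommRing R] [Ring S] [Algebra R S] {a : R} {x y : S}

theorem mul_pow_eq_of_mul_eq (hrel : y * x = x * y + a • x ^ 2) (i : ℕ) :
    y * x ^ i = x ^ i * y + ((i : R) * a) • x ^ (i + 1) := by
  induction i with
  | zero => simp
  | succ m ih =>
    rw [pow_succ, ← mul_assoc, ih, add_mul, smul_mul_assoc, ← pow_succ, mul_assoc, hrel,
      mul_add, mul_smul_comm, ← mul_assoc, ← pow_succ, ← pow_add]
    push_cast
    module

theorem add_mul_pow_mul_pow (hrel : y * x = x * y + a • x ^ 2) (i j : ℕ) :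
    (x + y) * (x ^ i * y ^ j) =
      x ^ i * y ^ (j + 1) + (1 + (i : R) * a) • (x ^ (i + 1) * y ^ j) := by
  rw [add_mul, ← mul_assoc, ← pow_succ', ← mul_assoc, mul_pow_eq_of_mul_eq hrel, add_mul,
    mul_assoc, ← pow_succ', smul_mul_assoc]
  module

theorem add_mul_sum_smul_pow_mul_pow (hrel : y * x = x * y + a • x ^ 2) {c : ℕ → R}
    (hc : ∀ i, c (i + 1) = -((1 + (i : R) * a) * c i)) (n : ℕ) :
    (x + y) * ∑ i ∈ Icc 1 n, c i • (x ^ i * y ^ (n - i)) =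
      c 1 • (x * y ^ n) - c (n + 1) • x ^ (n + 1) := by
  set g : ℕ → S := fun i ↦ c i • (x ^ i * y ^ (n + 1 - i))
  have hterm : ∀ i ∈ Icc 1 n, (x + y) * (c i • (x ^ i * y ^ (n - i))) = -(g (i + 1) - g i) := by
    intro i hi
    have hin : n - i + 1 = n + 1 - i := by grind
    simp only [g, mul_smul_comm, add_mul_pow_mul_pow hrel, hin, hc, Nat.add_sub_add_right]
    module
  rcases Nat.eq_zero_or_pos n with rfl | hn
  · simp
  rw [mul_sum, sum_congr rfl hterm, sum_neg_distrib, sum_Icc_sub hn]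
  simp [g]

end SkewRelation

def alphaCoeff (k : Type*) [Field k] (i : ℕ) : k :=
  (-1) ^ (i + 1) * ((i + 1).factorial : k) / 2 ^ (i + 1)

section AlphaCoeff

variable {k : Type*} [Field k]

theorem alphaCoeff_succ (h2 : (2 : k) ≠ 0) (i : ℕ) :
    alphaCoeff k (i + 1) = -((1 + (i : k) * 2⁻¹) * alphaCoeff k i) := by
  simp only [alphaCoeff, Nat.factorial_succ (i + 1)]
  push_cast
  field_simp
  ring

theorem alphaCoeff_one (h2 : (2 : k) ≠ 0) : alphaCoeff k 1 = 2⁻¹ := by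
  simp only [alphaCoeff]
  field_simp
  norm_num

theorem alphaCoeff_eq_zero {p i : ℕ} [CharP k p] (hp : 0 < p) (hi : p ≤ i + 1) :
    alphaCoeff k i = 0 := by
  have : ((i + 1).factorial : k) = 0 :=
    (CharP.cast_eq_zero_iff k p _).2 (Nat.dvd_factorial hp hi)
  simp [alphaCoeff, this]

end AlphaCoeff

/-- Lemma on α, part (b): `(x+y)·α = −y^{p−1} − (1/2)x·y^{p−2}`. -/
theorem stmt7 (k : Type*) [Field k] (p : ℕ) (hp : p.Prime) (hp2 : 2 < p) [CharP k p]
    (S : Type*) [Ring S] [Algebra k S] (x y : S)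
    (hrel : y * x = x * y + (2 : k)⁻¹ • x ^ 2) :
    (x + y) * (-(y ^ (p - 2)) +
        ∑ i ∈ Finset.Icc 1 (p - 2),
          (((-1 : k) ^ (i + 1) * ((i + 1).factorial : k)) / 2 ^ (i + 1)) •
            (x ^ i * y ^ (p - 2 - i))) =
      -(y ^ (p - 1)) - (2 : k)⁻¹ • (x * y ^ (p - 2)) := by
  have h2 : (2 : k) ≠ 0 := by
    intro h
    have := Nat.le_of_dvd two_pos ((CharP.cast_eq_zero_iff k p 2).1 (mod_cast h))
    omega
  obtain ⟨n, rfl⟩ : ∃ n, p = n + 2 := ⟨p - 2, by omega⟩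
  have htelescope := add_mul_sum_smul_pow_mul_pow hrel (alphaCoeff_succ h2) n
  rw [alphaCoeff_one h2, alphaCoeff_eq_zero hp.pos le_rfl] at htelescope
  simp only [alphaCoeff] at htelescope
  rw [Nat.add_sub_cancel, show n + 2 - 1 = n + 1 by omega, mul_add, htelescope, mul_neg,
    add_mul, ← pow_succ']
  linear_combination (norm := module) (mul_inv_cancel₀ h2) • (x * y ^ n)
end

section
/- Let k be a field of characteristic p > 2 and S = k⟨x,y⟩/(yx − xy − (1/2)x²). With α = −y^{p−2} + ∑_{i=1}^{p−2} (−1)^{i+1}((i+1)!/2^{i+1}) x^i y^{p−2−i}, one has α·x = (x+y)^{p−1} − y^{p−1} in S. -/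
/-!
Put `z = y + x/2`. Then `y x = x z` and `z x = x z + x²/2`, so every power `(z + t x)^n` has the
normal form `∑ C(n,i) ∏_{j<i} (t + j/2) xⁱ z^(n-i)`. Taking `t = ±1/2` expands `(x+y)^(p-1)` and
`y^(p-1)`; the product vanishes for `t = -1/2` and `i ≥ 2`, so the difference consists of the terms
with `i ≥ 1`, and as `C(p-1,i) ≡ (-1)ⁱ mod p` these are exactly those of `x α(z) = α x`.
-/

open Finset

section NormalOrdering

variable {k S : Type*} [CommSemiring k] [Semiring S] [Algebra k S] {x z : S} {c : k}

theorem mul_pow_eq_of_mul_eq_add_smul_sq (h : z * x = x * z + c • x ^ 2) (i : ℕ) :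
    z * x ^ i = x ^ i * z + (i * c) • x ^ (i + 1) := by
  induction i with
  | zero => simp
  | succ i ih =>
    rw [pow_succ, ← mul_assoc, ih, add_mul, mul_assoc, h, mul_add, ← mul_assoc, ← pow_succ,
      smul_mul_assoc, mul_smul_comm, ← pow_succ, ← pow_add]
    push_cast
    module

theorem add_smul_pow_eq_sum (h : z * x = x * z + c • x ^ 2) (t : k) (n : ℕ) :
    (z + t • x) ^ n = ∑ i ∈ range (n + 1),
      ((n.choose i : k) * ∏ j ∈ range i, (t + j * c)) • (x ^ i * z ^ (n - i)) := by
  simp only [mul_smul, Nat.cast_smul_eq_nsmul]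
  induction n with
  | zero => simp
  | succ n ih =>
    rw [sum_choose_succ_nsmul (fun i j ↦ (∏ l ∈ range i, (t + l * c)) • (x ^ i * z ^ j)),
      pow_succ', ih, mul_sum, ← sum_add_distrib]
    refine sum_congr rfl fun i hi ↦ ?_
    have hin : n + 1 - i = n - i + 1 := by have := mem_range.1 hi; omega
    have hstep : (z + t • x) * (x ^ i * z ^ (n - i)) =
        x ^ i * z ^ (n + 1 - i) + (t + i * c) • (x ^ (i + 1) * z ^ (n - i)) := by
      rw [hin, add_mul, ← mul_assoc, mul_pow_eq_of_mul_eq_add_smul_sq h, smul_mul_assoc,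
        ← mul_assoc, ← pow_succ', add_mul, smul_mul_assoc, mul_assoc, ← pow_succ', add_smul]
      abel
    rw [mul_smul_comm, mul_smul_comm, hstep, prod_range_succ, mul_smul, smul_add, smul_add]

end NormalOrdering

theorem CharP.cast_choose_sub_one_eq_neg_one_pow {R : Type*} [Ring R] {p : ℕ} [CharP R p]
    (hp : p.Prime) {i : ℕ} (hi : i < p) : ((p - 1).choose i : R) = (-1) ^ i := by
  induction i with
  | zero => simp
  | succ i ih =>
    have hdvd : ((p.choose (i + 1) : ℕ) : R) = 0 :=
      (CharP.cast_eq_zero_iff R p _).2 (hp.dvd_choose_self i.succ_ne_zero hi)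
    rw [← Nat.sub_add_cancel hp.one_le, Nat.choose_succ_succ, Nat.cast_add, ih (by omega)] at hdvd
    rw [pow_succ, mul_neg_one]
    exact eq_neg_of_add_eq_zero_right hdvd

theorem prod_range_add_natCast_mul_self {R : Type*} [CommSemiring R] (c : R) (i : ℕ) :
    ∏ j ∈ range i, (c + j * c) = i.factorial * c ^ i := by
  simp_rw [← one_add_mul, add_comm (1 : R), prod_mul_distrib, prod_const, card_range,
    ← prod_range_add_one_eq_factorial, Nat.cast_prod, Nat.cast_add_one]

theorem prod_range_add_two_neg_add_natCast_mul_self {R : Type*} [CommRing R] (c : R) (i : ℕ) :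
    ∏ j ∈ range (i + 2), (-c + j * c) = 0 :=
  prod_eq_zero (i := 1) (by simp) (by simp)

theorem add_smul_pow_sub_sub_smul_pow {k S : Type*} [CommRing k] [Ring S] [Algebra k S]
    {x z : S} {c : k} (h : z * x = x * z + c • x ^ 2) (n : ℕ) :
    (z + c • x) ^ (n + 2) - (z - c • x) ^ (n + 2) =
      ((n + 2 : k) * (c + c)) • (x * z ^ (n + 1)) +
        ∑ i ∈ range (n + 1),
          ((n + 2).choose (i + 2) * (i + 2).factorial * c ^ (i + 2) : k) •
            (x ^ (i + 2) * z ^ (n - i)) := by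
  rw [sub_eq_add_neg z, ← neg_smul, add_smul_pow_eq_sum h, add_smul_pow_eq_sum h,
    ← sum_sub_distrib, sum_range_succ', sum_range_succ']
  simp_rw [← sub_smul, ← mul_sub]
  simp only [range_zero, prod_empty, sub_self, mul_zero, zero_smul, add_zero,
    add_comm (∑ i ∈ _, _)]
  congr 1
  · simp
  · refine sum_congr rfl fun i _ ↦ ?_
    rw [prod_range_add_natCast_mul_self, prod_range_add_two_neg_add_natCast_mul_self, sub_zero,
      mul_assoc, Nat.add_sub_add_right]

/-- Lemma on α, part (c): `α·x = (x+y)^{p−1} − y^{p−1}`. -/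
theorem stmt8 (k : Type*) [Field k] (p : ℕ) (hp : p.Prime) (hp2 : 2 < p) [CharP k p]
    (S : Type*) [Ring S] [Algebra k S] (x y : S)
    (hrel : y * x = x * y + (2 : k)⁻¹ • x ^ 2) :
    (-(y ^ (p - 2)) +
        ∑ i ∈ Finset.Icc 1 (p - 2),
          (((-1 : k) ^ (i + 1) * ((i + 1).factorial : k)) / 2 ^ (i + 1)) •
            (x ^ i * y ^ (p - 2 - i))) * x =
      (x + y) ^ (p - 1) - y ^ (p - 1) := by
  obtain ⟨q, rfl⟩ : ∃ q, p = q + 3 := ⟨p - 3, by omega⟩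
  have h2 : (2 : k) ≠ 0 := Ring.two_ne_zero (by rw [ringChar.eq k (q + 3)]; omega)
  have hchoose {i : ℕ} (hi : i < q + 3) : ((q + 2).choose i : k) = (-1) ^ i :=
    CharP.cast_choose_sub_one_eq_neg_one_pow hp hi
  set c : k := (2 : k)⁻¹
  set z := y + c • x
  have hyx : y * x = x * z := by rw [hrel, mul_add, mul_smul_comm, sq]
  have hzx : z * x = x * z + c • x ^ 2 := by
    rw [add_mul, hyx, smul_mul_assoc, sq, mul_add, mul_smul_comm]
  have hx_add_y : x + y = z + c • x := by
    rw [add_assoc, ← add_smul, ← two_mul, mul_inv_cancel₀ h2, one_smul, add_comm]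
  have hy : y = z - c • x := (add_sub_cancel_right y _).symm
  have hy_pow_mul (n : ℕ) : y ^ n * x = x * z ^ n :=
    ((show SemiconjBy x z y from hyx.symm).pow_right n).eq.symm
  simp only [show q + 3 - 2 = q + 1 from rfl, show q + 3 - 1 = q + 2 from rfl]
  rw [add_mul, neg_mul, hy_pow_mul, sum_mul]
  simp_rw [smul_mul_assoc, mul_assoc, hy_pow_mul, ← mul_assoc, ← pow_succ]
  rw [hx_add_y, hy, add_smul_pow_sub_sub_smul_pow hzx, ← Finset.Ico_add_one_right_eq_Icc,
    sum_Ico_eq_sum_range, ← two_mul, mul_inv_cancel₀ h2]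
  congr 1
  · rw [show (q + 2 : k) = -1 by simpa using hchoose (i := 1) (by omega), mul_one, neg_one_smul]
  · refine sum_congr rfl fun i hi ↦ ?_
    rw [hchoose (by simp at hi; omega), add_comm 1 i, Nat.add_sub_add_right, div_eq_mul_inv,
      ← inv_pow]
end

section
/- Let k be a field of characteristic p > 2 and S = k⟨x,y⟩/(yx − xy − (1/2)x²). With α = −y^{p−2} + ∑_{i=1}^{p−2} (−1)^{i+1}((i+1)!/2^{i+1}) x^i y^{p−2−i}, one has α·(y − (1/2)x) = −(x+y)^{p−1} in S. -/
open Finset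

/-!
The relation gives `yⁿ x = x (x/2 + y)ⁿ` and the ordered binomial formula
`(t x + y)ⁿ = ∑ᵢ C(n,i) ∏_{l<i} (t + l/2) xⁱ yⁿ⁻ⁱ`. In characteristic `p` the falling factorial
`(p-1-a)(p-2-a)⋯(p-j-a)` is `(-1)ʲ (a+1)(a+2)⋯(a+j)`, and comparing coefficients in the basis
`xⁱ yʲ` gives `(x + y)^(p-1) = y^(p-3) (y - x/2)²` and `α = -y^(p-3) (y - x/2)`.
-/

namespace JordanPlane

variable {k S : Type*} [CommRing k] [Ring S] [Algebra k S] {c : k} {x y : S}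

theorem mul_pow_of_rel (hrel : y * x = x * y + c • x ^ 2) (n : ℕ) :
    y * x ^ n = x ^ n * y + (n * c) • x ^ (n + 1) := by
  induction n with
  | zero => simp
  | succ n ih =>
    calc y * x ^ (n + 1) = (y * x ^ n) * x := by rw [mul_assoc, pow_succ]
      _ = x ^ n * (y * x) + (n * c) • x ^ (n + 2) := by
        rw [ih, add_mul, mul_assoc, smul_mul_assoc, ← pow_succ]
      _ = x ^ (n + 1) * y + ((n + 1 : ℕ) * c) • x ^ (n + 2) := by
        rw [hrel, mul_add, mul_smul_comm, ← mul_assoc, ← pow_succ, ← pow_add]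
        push_cast
        module

theorem pow_mul_of_rel (hrel : y * x = x * y + c • x ^ 2) (n : ℕ) :
    y ^ n * x = x * (c • x + y) ^ n := by
  induction n with
  | zero => simp
  | succ n ih =>
    rw [pow_succ' y, mul_assoc, ih, ← mul_assoc, hrel, pow_succ' (c • x + y), ← mul_assoc]
    congr 1
    rw [mul_add, mul_smul_comm, sq]
    abel

theorem smul_add_pow_of_rel (hrel : y * x = x * y + c • x ^ 2) (t : k) (n : ℕ) :
    (t • x + y) ^ n = ∑ i ∈ range (n + 1),
      n.choose i • (∏ l ∈ range i, (t + l * c)) • (x ^ i * y ^ (n - i)) := by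
  induction n with
  | zero => simp
  | succ n ih =>
    have step : ∀ i ∈ range (n + 1), (t • x + y) * (x ^ i * y ^ (n - i)) =
        x ^ i * y ^ (n + 1 - i) + (t + i * c) • (x ^ (i + 1) * y ^ (n - i)) := by
      intro i hi
      calc (t • x + y) * (x ^ i * y ^ (n - i))
          = t • (x ^ (i + 1) * y ^ (n - i)) + (y * x ^ i) * y ^ (n - i) := by
            rw [add_mul, smul_mul_assoc, ← mul_assoc, ← pow_succ', mul_assoc]
        _ = _ := by
            rw [mul_pow_of_rel hrel, add_mul, smul_mul_assoc, mul_assoc, ← pow_succ',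
              show n - i + 1 = n + 1 - i by grind]
            module
    rw [pow_succ', ih, mul_sum, show n + 1 + 1 = n + 2 from rfl,
      sum_choose_succ_nsmul (fun i j ↦ (∏ l ∈ range i, (t + l * c)) • (x ^ i * y ^ j)),
      ← sum_add_distrib]
    refine sum_congr rfl fun i hi ↦ ?_
    rw [mul_smul_comm, mul_smul_comm, step i hi, prod_range_succ]
    module

end JordanPlane

theorem Finset.prod_range_natCast_mul_add_mul {R : Type*} [CommRing R] (a i : ℕ) (c : R) :
    ∏ l ∈ range i, ((a : R) * c + l * c) = c ^ i * a.ascFactorial i := by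
  induction i with
  | zero => simp
  | succ i ih =>
    rw [prod_range_succ, ih, Nat.ascFactorial_succ]
    push_cast
    ring

theorem CharP.two_ne_zero_of_two_lt {R : Type*} [AddMonoidWithOne R] (p : ℕ) [CharP R p]
    (hp : 2 < p) : (2 : R) ≠ 0 := by
  have := (CharP.cast_eq_zero_iff R p 2).not.2 fun h ↦ by have := Nat.le_of_dvd two_pos h; omega
  exact_mod_cast this

theorem CharP.natCast_descFactorial_sub_one_sub {R : Type*} [CommRing R] (p : ℕ) [CharP R p]
    {a : ℕ} (ha : a < p) (j : ℕ) :
    ((p - 1 - a).descFactorial j : R) = (-1) ^ j * (a + 1).ascFactorial j := by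
  induction j with
  | zero => simp
  | succ j ih =>
    rw [Nat.descFactorial_succ, Nat.ascFactorial_succ, Nat.cast_mul, Nat.cast_mul]
    by_cases hj : j ≤ p - 1 - a
    · have hsum : ((p - 1 - a - j : ℕ) : R) = -((a + 1 + j : ℕ) : R) := by
        rw [eq_neg_iff_add_eq_zero, ← Nat.cast_add, show p - 1 - a - j + (a + 1 + j) = p by omega,
          CharP.cast_eq_zero]
      rw [hsum]
      linear_combination (-((a + 1 + j : ℕ) : R)) * ih
    · rw [Nat.descFactorial_eq_zero_iff_lt.2 (by omega), Nat.cast_zero] at ih ⊢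
      linear_combination (-((a + 1 + j : ℕ) : R)) * ih

namespace JordanPlane

variable {k S : Type*} [Field k] [Ring S] [Algebra k S] {x y : S} {n : ℕ} [CharP k (n + 3)]

theorem add_pow_eq_sum_of_charP (hrel : y * x = x * y + (2 : k)⁻¹ • x ^ 2) :
    (x + y) ^ (n + 2) = ∑ i ∈ range (n + 3),
      ((-1) ^ i * (i + 1).factorial / 2 ^ i : k) • (x ^ i * y ^ (n + 2 - i)) := by
  have h2 : (2 : k) ≠ 0 := CharP.two_ne_zero_of_two_lt (n + 3) (by omega)
  rw [← one_smul k x, smul_add_pow_of_rel hrel]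
  refine sum_congr rfl fun i _ ↦ ?_
  have hprod : ∏ l ∈ range i, (1 + l * (2 : k)⁻¹) = 2⁻¹ ^ i * (i + 1).factorial := by
    have hone : (1 : k) = (2 : ℕ) * 2⁻¹ := by push_cast; field_simp
    rw [hone, prod_range_natCast_mul_add_mul, add_comm i, ← Nat.factorial_mul_ascFactorial 1 i]
    simp
  have hchoose : ((n + 2).choose i * i.factorial : k) = (-1) ^ i * i.factorial := by
    have := CharP.natCast_descFactorial_sub_one_sub (R := k) (n + 3) (a := 0) (by omega) i
    rw [Nat.one_ascFactorial, show n + 3 - 1 - 0 = n + 2 by omega,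
      Nat.descFactorial_eq_factorial_mul_choose] at this
    push_cast at this
    linear_combination this
  rw [one_smul, ← Nat.cast_smul_eq_nsmul k, smul_smul, hprod, Nat.factorial_succ]
  congr 1
  push_cast
  rw [inv_pow]
  field_simp
  linear_combination (i + 1 : k) * hchoose

theorem pow_mul_eq_sum_of_charP (hrel : y * x = x * y + (2 : k)⁻¹ • x ^ 2) :
    y ^ n * x = ∑ i ∈ range (n + 1),
      ((-1) ^ i * (i + 2).factorial / 2 ^ (i + 1) : k) • (x ^ (i + 1) * y ^ (n - i)) := by
  have h2 : (2 : k) ≠ 0 := CharP.two_ne_zero_of_two_lt (n + 3) (by omega)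
  rw [pow_mul_of_rel hrel, smul_add_pow_of_rel hrel, mul_sum]
  refine sum_congr rfl fun i _ ↦ ?_
  have hprod : ∏ l ∈ range i, ((2 : k)⁻¹ + l * 2⁻¹) = 2⁻¹ ^ i * i.factorial := by
    rw [← Nat.one_ascFactorial, ← prod_range_natCast_mul_add_mul, Nat.cast_one]
    simp_rw [one_mul]
  have hchoose : (n.choose i * i.factorial : k) = (-1) ^ i * (2 + 1).ascFactorial i := by
    have := CharP.natCast_descFactorial_sub_one_sub (R := k) (n + 3) (a := 2) (by omega) i
    rw [show n + 3 - 1 - 2 = n by omega, Nat.descFactorial_eq_factorial_mul_choose] at this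
    push_cast at this
    linear_combination this
  have hfac : ((i + 2).factorial : k) = 2 * (2 + 1).ascFactorial i := by
    rw [add_comm i, ← Nat.factorial_mul_ascFactorial 2 i]
    simp
  rw [← Nat.cast_smul_eq_nsmul k, smul_smul, hprod, mul_smul_comm, ← mul_assoc x, ← pow_succ']
  congr 1
  rw [hfac, inv_pow]
  field_simp
  linear_combination 2 ^ (i + 1) * hchoose

theorem add_pow_eq_pow_mul_sub_sq (hrel : y * x = x * y + (2 : k)⁻¹ • x ^ 2) :
    (x + y) ^ (n + 2) = y ^ n * (y - (2 : k)⁻¹ • x) ^ 2 := by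
  have h2 : (2 : k) ≠ 0 := CharP.two_ne_zero_of_two_lt (n + 3) (by omega)
  have hsq : (y - (2 : k)⁻¹ • x) ^ 2 = y ^ 2 - x * y := by
    simp only [sq, sub_mul, mul_sub, smul_mul_assoc, mul_smul_comm, hrel]
    match_scalars <;> field_simp <;> ring
  have hfac : ((n + 3).factorial : k) = 0 :=
    (CharP.cast_eq_zero_iff k (n + 3) _).2 (Nat.dvd_factorial (by omega) le_rfl)
  rw [hsq, mul_sub, ← pow_add, ← mul_assoc, pow_mul_eq_sum_of_charP hrel, sum_mul,
    add_pow_eq_sum_of_charP hrel, sum_range_succ, sum_range_succ', hfac]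
  simp only [mul_zero, zero_div, zero_smul, add_zero, zero_add, pow_zero, one_mul, div_one,
    Nat.factorial_one, Nat.cast_one, Nat.sub_zero, one_smul, sub_eq_neg_add, ← sum_neg_distrib]
  congr 1
  refine sum_congr rfl fun i hi ↦ ?_
  rw [mem_range] at hi
  rw [smul_mul_assoc, mul_assoc, ← pow_succ, ← neg_smul, show n - i + 1 = n + 2 - (i + 1) by omega]
  congr 1
  rw [pow_succ]
  ring

theorem neg_pow_mul_sub_eq_sum_of_charP (hrel : y * x = x * y + (2 : k)⁻¹ • x ^ 2) :
    -(y ^ n * (y - (2 : k)⁻¹ • x)) = -(y ^ (n + 1)) + ∑ i ∈ Icc 1 (n + 1),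
      ((-1 : k) ^ (i + 1) * (i + 1).factorial / 2 ^ (i + 1)) • (x ^ i * y ^ (n + 1 - i)) := by
  have h2 : (2 : k) ≠ 0 := CharP.two_ne_zero_of_two_lt (n + 3) (by omega)
  rw [mul_sub, mul_smul_comm, pow_mul_eq_sum_of_charP hrel, ← pow_succ, smul_sum,
    ← Ico_add_one_right_eq_Icc, sum_Ico_eq_sum_range, neg_sub, sub_eq_neg_add]
  congr 1
  refine sum_congr rfl fun i _ ↦ ?_
  rw [smul_smul, add_comm 1 i, show n + 1 - (i + 1) = n - i by omega]
  congr 1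
  field_simp
  ring

end JordanPlane

open JordanPlane in
theorem stmt9_general (k : Type*) [Field k] (p : ℕ) (hp2 : 2 < p) [CharP k p]
    (S : Type*) [Ring S] [Algebra k S] (x y : S)
    (hrel : y * x = x * y + (2 : k)⁻¹ • x ^ 2) :
    (-(y ^ (p - 2)) +
        ∑ i ∈ Finset.Icc 1 (p - 2),
          (((-1 : k) ^ (i + 1) * ((i + 1).factorial : k)) / 2 ^ (i + 1)) •
            (x ^ i * y ^ (p - 2 - i))) * (y - (2 : k)⁻¹ • x) =
      -((x + y) ^ (p - 1)) := by
  obtain ⟨n, rfl⟩ : ∃ n, p = n + 3 := ⟨p - 3, by omega⟩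
  simp only [show n + 3 - 2 = n + 1 by omega, show n + 3 - 1 = n + 2 by omega]
  rw [← neg_pow_mul_sub_eq_sum_of_charP hrel, add_pow_eq_pow_mul_sub_sq hrel, neg_mul, mul_assoc,
    ← sq]

/-- Lemma on α, part (d): `α·(y − (1/2)x) = −(x+y)^{p−1}`. -/
theorem stmt9 (k : Type*) [Field k] (p : ℕ) (hp : p.Prime) (hp2 : 2 < p) [CharP k p]
    (S : Type*) [Ring S] [Algebra k S] (x y : S)
    (hrel : y * x = x * y + (2 : k)⁻¹ • x ^ 2) :
    (-(y ^ (p - 2)) +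
        ∑ i ∈ Finset.Icc 1 (p - 2),
          (((-1 : k) ^ (i + 1) * ((i + 1).factorial : k)) / 2 ^ (i + 1)) •
            (x ^ i * y ^ (p - 2 - i))) * (y - (2 : k)⁻¹ • x) =
      -((x + y) ^ (p - 1)) :=
  stmt9_general k p hp2 S x y hrel
end

section
/- Let k be a field of characteristic p > 2 and S = k⟨x,y⟩/(yx − xy − (1/2)x²). Then (x+y)^p = y^p in S. -/
open Finset

section Aux

variable {k : Type*} [Field k] {S : Type*} [Ring S] [Algebra k S]

/-- The coefficient `C(n,i) * (i+1)! / 2^i` in `k`. -/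
def cf (k : Type*) [Field k] (n i : ℕ) : k :=
  ((n.choose i * (i+1).factorial : ℕ) : k) * ((2:k)⁻¹)^i

lemma cf_zero (n : ℕ) : cf k n 0 = 1 := by simp [cf]

lemma cf_succ_succ (n i : ℕ) (h2 : (2:k) ≠ 0) :
    cf k (n+1) (i+1) = cf k n (i+1) + cf k n i * ((i:k)+2) * (2:k)⁻¹ := by
  have h : ((2:k)⁻¹) * 2 = 1 := inv_mul_cancel₀ h2
  simp only [cf, Nat.choose_succ_succ, Nat.factorial_succ, pow_succ]
  push_cast
  field_simp
  ring

lemma comm_pow (x y : S) (hrel : y * x = x * y + (2 : k)⁻¹ • x ^ 2) (i : ℕ) :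
    y * x ^ i = x ^ i * y + ((i : k) * (2:k)⁻¹) • x ^ (i+1) := by
  induction i with
  | zero => simp
  | succ i ih =>
    have h1 : y * x ^ (i+1) = (y * x ^ i) * x := by rw [pow_succ, ← mul_assoc]
    have h2 : x ^ i * x ^ 2 = x ^ (i + 2) := by rw [← pow_add]
    rw [h1, ih, add_mul, smul_mul_assoc, ← pow_succ, mul_assoc, hrel, mul_add,
      mul_smul_comm, h2, ← mul_assoc, ← pow_succ]
    have h3 : ((i:k)+1) * (2:k)⁻¹ = (i:k) * (2:k)⁻¹ + (2:k)⁻¹ := by ring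
    push_cast
    rw [h3, add_smul]
    abel

lemma main_formula (x y : S) (hrel : y * x = x * y + (2 : k)⁻¹ • x ^ 2)
    (h2 : (2:k) ≠ 0) (n : ℕ) :
    (x + y) ^ n = ∑ i ∈ range (n+1), cf k n i • (x ^ i * y ^ (n - i)) := by
  induction n with
  | zero => simp [cf]
  | succ n ih =>
    -- termwise expansion on the left
    have key : ∀ i ∈ range (n+1),
        (x + y) * (cf k n i • (x ^ i * y ^ (n - i)))
          = cf k n i • (x ^ i * y ^ (n + 1 - i))
            + (cf k n i * ((i:k)+2) * (2:k)⁻¹) • (x ^ (i+1) * y ^ (n - i)) := by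
      intro i hi
      have hi' : i ≤ n := by simpa [Nat.lt_succ_iff] using hi
      have hsub : n + 1 - i = (n - i) + 1 := by omega
      rw [add_mul, mul_smul_comm, mul_smul_comm, ← mul_assoc, ← pow_succ',
        ← mul_assoc, comm_pow x y hrel i, add_mul, smul_mul_assoc, mul_assoc,
        ← pow_succ', hsub, smul_add, smul_smul]
      have hc : cf k n i + cf k n i * ((i:k) * (2:k)⁻¹)
          = cf k n i * ((i:k)+2) * (2:k)⁻¹ := by
        field_simp
        ring
      rw [← hc, add_smul]
      abel
    calc (x + y) ^ (n+1) = (x + y) * (x + y) ^ n := by rw [pow_succ']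
      _ = ∑ i ∈ range (n+1), (x + y) * (cf k n i • (x ^ i * y ^ (n - i))) := by
          rw [ih, Finset.mul_sum]
      _ = ∑ i ∈ range (n+1), (cf k n i • (x ^ i * y ^ (n + 1 - i))
            + (cf k n i * ((i:k)+2) * (2:k)⁻¹) • (x ^ (i+1) * y ^ (n - i))) :=
          Finset.sum_congr rfl key
      _ = (∑ i ∈ range (n+1), cf k n i • (x ^ i * y ^ (n + 1 - i)))
            + ∑ i ∈ range (n+1),
              (cf k n i * ((i:k)+2) * (2:k)⁻¹) • (x ^ (i+1) * y ^ (n - i)) :=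
          Finset.sum_add_distrib
      _ = ∑ i ∈ range (n+2), cf k (n+1) i • (x ^ i * y ^ (n + 1 - i)) := by
          -- split the RHS with sum_range_succ' (peel the 0 term)
          rw [Finset.sum_range_succ' (fun i => cf k (n+1) i • (x ^ i * y ^ (n + 1 - i))) (n+1)]
          -- the shifted terms
          have hshift : ∀ i ∈ range (n+1),
              cf k (n+1) (i+1) • (x ^ (i+1) * y ^ (n + 1 - (i+1)))
                = cf k n (i+1) • (x ^ (i+1) * y ^ (n + 1 - (i+1)))
                  + (cf k n i * ((i:k)+2) * (2:k)⁻¹) • (x ^ (i+1) * y ^ (n - i)) := by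
            intro i hi
            have hsub : n + 1 - (i+1) = n - i := by omega
            rw [cf_succ_succ n i h2, add_smul, hsub]
          rw [Finset.sum_congr rfl hshift, Finset.sum_add_distrib]
          -- now handle first sum on the left: over range (n+1), extend to match
          have hfirst : (∑ i ∈ range (n+1), cf k n i • (x ^ i * y ^ (n + 1 - i)))
              = (∑ i ∈ range (n+1), cf k n (i+1) • (x ^ (i+1) * y ^ (n + 1 - (i+1))))
                + cf k (n+1) 0 • (x ^ 0 * y ^ (n + 1 - 0)) := by
            have h0 : cf k (n+1) 0 = cf k n 0 := by rw [cf_zero, cf_zero]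
            have hlast : cf k n (n+1) • (x ^ (n+1) * y ^ (n + 1 - (n+1))) = (0:S) := by
              simp [cf, Nat.choose_eq_zero_of_lt (Nat.lt_succ_self n)]
            rw [Finset.sum_range_succ
              (fun i => cf k n (i+1) • (x ^ (i+1) * y ^ (n + 1 - (i+1)))) n, hlast, add_zero,
              h0, ← Finset.sum_range_succ' (fun i => cf k n i • (x ^ i * y ^ (n + 1 - i))) n]
          rw [hfirst]
          abel

end Aux

/-- In `S = k⟨x,y⟩/(yx − xy − (1/2)x²)` over a field of characteristic `p > 2`,
one has `(x+y)^p = y^p`. -/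
theorem stmt10 (k : Type*) [Field k] (p : ℕ) (hp : p.Prime) (hp2 : 2 < p) [CharP k p]
    (S : Type*) [Ring S] [Algebra k S] (x y : S)
    (hrel : y * x = x * y + (2 : k)⁻¹ • x ^ 2) :
    (x + y) ^ p = y ^ p := by
  have h2 : (2:k) ≠ 0 := by
    intro h
    have h2' : ((2:ℕ):k) = 0 := by exact_mod_cast h
    have := (CharP.cast_eq_zero_iff k p 2).mp h2'
    have := Nat.le_of_dvd (by norm_num) this
    omega
  rw [main_formula x y hrel h2 p]
  rw [Finset.sum_eq_single 0]
  · simp [cf]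
  · intro i _ hi0
    have hcf : cf k p i = 0 := by
      have hdvd : p ∣ p.choose i * (i+1).factorial := by
        rcases lt_or_ge i p with hlt | hge
        · exact Dvd.dvd.mul_right (hp.dvd_choose_self hi0 hlt) _
        · refine Dvd.dvd.mul_left ?_ _
          exact Nat.dvd_factorial hp.pos (by omega)
      have : ((p.choose i * (i+1).factorial : ℕ) : k) = 0 :=
        (CharP.cast_eq_zero_iff k p _).mpr hdvd
      simp [cf, this]
    simp [hcf]
  · intro h
    exact absurd (Finset.mem_range.mpr (by omega)) h
end

section
/- Let k be a field of characteristic p > 2 and S = k⟨x,y⟩/(yx − xy − (1/2)x²). Then (y^{p−1} + (1/2)x y^{p−2})·x = x·y^{p−1} in S, equivalently y^{p−1}x + (1/2)x y^{p−2} x = x y^{p−1}. -/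
open Finset

private lemma drec_aux (n i : ℕ) :
    (n+1).descFactorial (i+1) = n.descFactorial (i+1) + (i+1) * n.descFactorial i := by
  rw [Nat.succ_descFactorial_succ, Nat.descFactorial_succ]
  rcases le_or_gt i n with h | h
  · rw [← add_mul]; congr 1; omega
  · rw [Nat.descFactorial_eq_zero_iff_lt.2 h]; simp

private lemma comm_aux {k : Type*} [Field k] {S : Type*} [Ring S] [Algebra k S]
    (c : k) (x y : S) (hrel : y * x = x * y + c • x ^ 2) (m : ℕ) :
    y * x ^ m = x ^ m * y + ((m : k) * c) • x ^ (m+1) := by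
  induction m with
  | zero => simp
  | succ m ih =>
    rw [pow_succ, ← mul_assoc, ih, add_mul, smul_mul_assoc, mul_assoc, hrel, mul_add,
      mul_smul_comm, ← pow_succ, ← pow_succ, ← pow_add, ← mul_assoc, ← pow_succ,
      show m+1+1 = m+2 from rfl]
    push_cast
    module

private lemma pow_comm_aux {k : Type*} [Field k] {S : Type*} [Ring S] [Algebra k S]
    (c : k) (x y : S) (hrel : y * x = x * y + c • x ^ 2) (n : ℕ) :
    y ^ n * x = ∑ i ∈ range (n+1),
      ((n.descFactorial i : k) * c ^ i) • (x ^ (i+1) * y ^ (n - i)) := by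
  induction n with
  | zero => simp
  | succ n ih =>
    have h1 : y ^ (n+1) * x = y * (y ^ n * x) := by rw [pow_succ', mul_assoc]
    rw [h1, ih, Finset.mul_sum]
    have h2 : ∀ i ∈ range (n+1),
        y * (((n.descFactorial i : k) * c ^ i) • (x ^ (i+1) * y ^ (n - i)))
        = ((n.descFactorial i : k) * c ^ i) • (x ^ (i+1) * y ^ (n+1-i))
          + (((i+1 : ℕ) : k) * (n.descFactorial i : k) * c ^ (i+1)) • (x ^ (i+2) * y ^ (n-i)) := by
      intro i hi
      rw [mem_range] at hi
      have hni : n + 1 - i = (n - i) + 1 := by omega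
      rw [mul_smul_comm, ← mul_assoc, comm_aux c x y hrel (i+1), add_mul, smul_mul_assoc,
        mul_assoc, ← pow_succ', hni, show i+1+1 = i+2 from rfl]
      push_cast
      module
    rw [Finset.sum_congr rfl h2, Finset.sum_add_distrib,
      Finset.sum_range_succ'
        (fun i => (((n+1).descFactorial i : k) * c ^ i) • (x ^ (i+1) * y ^ (n+1-i))) (n+1),
      Finset.sum_range_succ'
        (fun i => ((n.descFactorial i : k) * c ^ i) • (x ^ (i+1) * y ^ (n+1-i))) n]
    have h3 : ∀ i ∈ range (n+1),
        (((n+1).descFactorial (i+1) : k) * c ^ (i+1)) • (x ^ (i+1+1) * y ^ (n+1-(i+1)))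
        = ((n.descFactorial (i+1) : k) * c ^ (i+1)) • (x ^ (i+1+1) * y ^ (n+1-(i+1)))
          + (((i+1 : ℕ) : k) * (n.descFactorial i : k) * c ^ (i+1)) • (x ^ (i+2) * y ^ (n-i)) := by
      intro i hi
      rw [drec_aux, show n+1-(i+1) = n-i by omega, show i+1+1 = i+2 from rfl]
      push_cast
      module
    rw [Finset.sum_congr rfl h3, Finset.sum_add_distrib, Finset.sum_range_succ
      (fun i => ((n.descFactorial (i+1) : k) * c ^ (i+1)) • (x ^ (i+1+1) * y ^ (n+1-(i+1)))) n]
    rw [Nat.descFactorial_eq_zero_iff_lt.2 (Nat.lt_succ_self n)]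
    simp only [Nat.cast_zero, zero_mul, zero_smul, add_zero, Nat.descFactorial_zero,
      Nat.cast_one, one_mul]
    abel

/-- `(y^{p−1} + (1/2) x y^{p−2})·x = x·y^{p−1}` in `S = k⟨x,y⟩/(yx − xy − (1/2)x²)`. -/
theorem stmt11 (k : Type*) [Field k] (p : ℕ) (hp : p.Prime) (hp2 : 2 < p) [CharP k p]
    (S : Type*) [Ring S] [Algebra k S] (x y : S)
    (hrel : y * x = x * y + (2 : k)⁻¹ • x ^ 2) :
    y ^ (p - 1) * x + (2 : k)⁻¹ • (x * y ^ (p - 2) * x) = x * y ^ (p - 1) := by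
  set c : k := (2 : k)⁻¹ with hc
  obtain ⟨m, rfl⟩ : ∃ m, p = m + 2 := ⟨p - 2, by omega⟩
  have e1 : m + 2 - 1 = m + 1 := by omega
  have e2 : m + 2 - 2 = m := by omega
  rw [e1, e2, mul_assoc, pow_comm_aux c x y hrel m, Finset.mul_sum, Finset.smul_sum]
  have h2 : ∀ i ∈ range (m+1),
      c • (x * (((m.descFactorial i : k) * c ^ i) • (x ^ (i+1) * y ^ (m - i))))
      = ((m.descFactorial i : k) * c ^ (i+1)) • (x ^ (i+1+1) * y ^ (m+1-(i+1))) := by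
    intro i hi
    rw [mem_range] at hi
    rw [show m+1-(i+1) = m-i by omega, mul_smul_comm, smul_smul, ← mul_assoc x, ← pow_succ']
    congr 1
    ring
  rw [Finset.sum_congr rfl h2, pow_comm_aux c x y hrel (m+1),
    Finset.sum_range_succ'
      (fun i => (((m+1).descFactorial i : k) * c ^ i) • (x ^ (i+1) * y ^ (m+1-i))) (m+1),
    add_right_comm, ← Finset.sum_add_distrib]
  have h3 : ∀ i ∈ range (m+1),
      (((m+1).descFactorial (i+1) : k) * c ^ (i+1)) • (x ^ (i+1+1) * y ^ (m+1-(i+1)))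
      + ((m.descFactorial i : k) * c ^ (i+1)) • (x ^ (i+1+1) * y ^ (m+1-(i+1))) = 0 := by
    intro i hi
    rw [← add_smul, Nat.succ_descFactorial_succ]
    have hp0 : ((m + 2 : ℕ) : k) = 0 := CharP.cast_eq_zero k (m+2)
    have : ((m+1) * m.descFactorial i : k) * c ^ (i+1) + (m.descFactorial i : k) * c ^ (i+1) = 0 := by
      push_cast at hp0 ⊢
      linear_combination ((m.descFactorial i : k) * c ^ (i+1)) * hp0
    push_cast at this ⊢
    rw [this, zero_smul]
  rw [Finset.sum_congr rfl h3, Finset.sum_const, smul_zero, zero_add]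
  simp
end

section
/- Let A = k[x]/(x^p) and B = k[y]/(y^p) over a field k of characteristic p > 2. Define τ: B⊗A → A⊗B by τ(y^r ⊗ x^ℓ) = ∑_{t=0}^{r} C(r,t)(1/2)^t [ℓ]^[t] x^{ℓ+t} ⊗ y^{r−t} (extended k-linearly, where x^m = 0 for m ≥ p and y^m = 0 for m ≥ p). Then τ is bijective, with inverse given by τ^{-1}(x^ℓ ⊗ y^r) = ∑_{t=0}^{r} C(r,t)(−1/2)^t [ℓ]^[t] y^{r−t} ⊗ x^{ℓ+t}. -/
open TensorProduct Polynomial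

/-- The truncated polynomial ring `k[X]/(X^p)`. -/
abbrev TruncPoly (k : Type*) [Field k] (p : ℕ) : Type _ :=
  Polynomial k ⧸ Ideal.span {(Polynomial.X : Polynomial k) ^ p}

/-- The generator of the truncated polynomial ring. -/
noncomputable def tgen (k : Type*) [Field k] (p : ℕ) : TruncPoly k p :=
  Ideal.Quotient.mk _ Polynomial.X

/-! Write `T_c` for the operator `v ↦ (r, ℓ) ↦ ∑_t C(r,t) c^t [ℓ]^[t] v(r-t, ℓ+t)` on doubly
indexed families. The identities `C(r,t) C(r-t,u-t) = C(r,u) C(u,t)` and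
`[ℓ]^[t] [ℓ+t]^[u-t] = [ℓ]^[u]` collapse `T_c T_d` to the binomial expansion of `(c + d)^u`, so
`T_c T_d = T_{c+d}` and `T_0 = id`. On the monomials `x^ℓ ⊗ y^r`, which form a basis, `τ` acts as
`T_{1/2}` and `σ` as `T_{-1/2}` (each followed by swapping the tensor factors), hence they are
mutually inverse. -/

universe u v w

section Twist

open Finset

variable {k : Type u} {M : Type v} {N : Type w} [CommRing k] [AddCommMonoid M] [Module k M]
  [AddCommMonoid N] [Module k N]

def twistCoeff (c : k) (r ℓ t : ℕ) : k :=
  r.choose t * c ^ t * ℓ.ascFactorial t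

def twist (c : k) (v : ℕ → ℕ → M) (r ℓ : ℕ) : M :=
  ∑ t ∈ range (r + 1), twistCoeff c r ℓ t • v (r - t) (ℓ + t)

lemma twistCoeff_mul_twistCoeff (c d : k) {r ℓ t u : ℕ} (htu : t ≤ u) :
    twistCoeff c r ℓ t * twistCoeff d (r - t) (ℓ + t) (u - t) =
      r.choose u * ℓ.ascFactorial u * (c ^ t * d ^ (u - t) * u.choose t) := by
  have hchoose : (r.choose u * u.choose t : k) = r.choose t * (r - t).choose (u - t) := by
    exact_mod_cast congrArg (Nat.cast : ℕ → k) (Nat.choose_mul (n := r) htu)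
  have hasc : (ℓ.ascFactorial t * (ℓ + t).ascFactorial (u - t) : k) = ℓ.ascFactorial u := by
    exact_mod_cast congrArg (Nat.cast : ℕ → k) (by
      rw [Nat.ascFactorial_mul_ascFactorial, Nat.add_sub_cancel' htu])
  unfold twistCoeff
  linear_combination (c ^ t * d ^ (u - t) * ℓ.ascFactorial t * (ℓ + t).ascFactorial (u - t))
      * hchoose.symm + (c ^ t * d ^ (u - t) * r.choose u * u.choose t) * hasc

lemma twist_twist (c d : k) (v : ℕ → ℕ → M) : twist c (twist d v) = twist (c + d) v := by
  funext r ℓ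
  have hrange : ∀ t ∈ range (r + 1), ∑ s ∈ range (r - t + 1),
      twistCoeff c r ℓ t • twistCoeff d (r - t) (ℓ + t) s • v (r - t - s) (ℓ + t + s) =
      ∑ s ∈ range (r + 1 - t),
      (twistCoeff c r ℓ t * twistCoeff d (r - t) (ℓ + t) s) • v (r - t - s) (ℓ + t + s) := by
    intro t ht
    rw [show r - t + 1 = r + 1 - t by grind]
    simp only [smul_smul]
  simp only [twist, smul_sum]
  rw [sum_congr rfl hrange, ← sum_range_diag_flip]
  refine sum_congr rfl fun u _ => ?_
  calc _ = ∑ t ∈ range (u + 1), (r.choose u * ℓ.ascFactorial u *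
          (c ^ t * d ^ (u - t) * u.choose t)) • v (r - u) (ℓ + u) :=
        sum_congr rfl fun t ht => by
          have htu : t ≤ u := Nat.lt_succ_iff.mp (mem_range.mp ht)
          rw [twistCoeff_mul_twistCoeff c d htu, show r - t - (u - t) = r - u by omega,
            show ℓ + t + (u - t) = ℓ + u by omega]
    _ = _ := by
      rw [← sum_smul, ← mul_sum, ← add_pow, twistCoeff, mul_right_comm]

lemma twist_zero (v : ℕ → ℕ → M) : twist (0 : k) v = v := by
  funext r ℓ
  simp [twist, twistCoeff, sum_range_succ']

lemma twist_eq_zero {v : ℕ → ℕ → M} {n ℓ : ℕ} (hv : ∀ a b, n ≤ b → v a b = 0) (hℓ : n ≤ ℓ)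
    (c : k) (r : ℕ) : twist c v r ℓ = 0 :=
  sum_eq_zero fun t _ => by rw [hv _ _ (by omega), smul_zero]

lemma map_twist (f : M →ₗ[k] N) {v : ℕ → ℕ → M} {w : ℕ → ℕ → N} {r : ℕ}
    (h : ∀ a ≤ r, ∀ b, f (v a b) = w a b) (c : k) (ℓ : ℕ) :
    f (twist c v r ℓ) = twist c w r ℓ := by
  simp only [twist, map_sum, map_smul]
  exact sum_congr rfl fun t _ => by rw [h _ (Nat.sub_le r t)]

lemma map_eq_twist_of_lt {f : M →ₗ[k] N} {u : ℕ → ℕ → M} {w : ℕ → ℕ → N} {n : ℕ} {c : k}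
    (hu : ∀ a b, n ≤ b → u a b = 0) (hw : ∀ a b, n ≤ b → w a b = 0)
    (hf : ∀ r ℓ, r < n → ℓ < n → f (u r ℓ) = twist c w r ℓ) {r : ℕ} (hr : r < n) (ℓ : ℕ) :
    f (u r ℓ) = twist c w r ℓ := by
  rcases lt_or_ge ℓ n with hℓ | hℓ
  · exact hf r ℓ hr hℓ
  · rw [hu r ℓ hℓ, map_zero, twist_eq_zero hw hℓ]

lemma apply_apply_eq_self_of_eq_twist {f : M →ₗ[k] N} {g : N →ₗ[k] M}
    {u : ℕ → ℕ → M} {w : ℕ → ℕ → N} {n : ℕ} {c d : k} (hcd : c + d = 0) (hu : ∀ a b, n ≤ b → u a b = 0) (hw : ∀ a b, n ≤ b → w a b = 0)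
    (hf : ∀ r ℓ, r < n → ℓ < n → f (u r ℓ) = twist c w r ℓ)
    (hg : ∀ r ℓ, r < n → ℓ < n → g (w r ℓ) = twist d u r ℓ) {r : ℕ} (hr : r < n) (ℓ : ℕ) :
    g (f (u r ℓ)) = u r ℓ := by
  have hg' : ∀ a ≤ r, ∀ b, g (w a b) = twist d u a b := fun a ha =>
    map_eq_twist_of_lt hw hu hg (ha.trans_lt hr)
  rw [map_eq_twist_of_lt hu hw hf hr, map_twist g hg', twist_twist, hcd, twist_zero]

end Twist

section TruncPoly

variable (k : Type u) [Field k] (p : ℕ)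

lemma tgen_pow_eq_zero {m : ℕ} (hm : p ≤ m) : tgen k p ^ m = 0 :=
  pow_eq_zero_of_le hm ((map_pow (AdjoinRoot.mk (X ^ p)) X p).symm.trans AdjoinRoot.mk_self)

-- `TruncPoly k p` is `AdjoinRoot (X ^ p)` by definition.
noncomputable def truncPolyBasis : Module.Basis (Fin p) k (TruncPoly k p) :=
  let pb := AdjoinRoot.powerBasis' (monic_X_pow (R := k) p)
  pb.basis.reindex (finCongr (natDegree_X_pow p : pb.dim = p))

lemma truncPolyBasis_apply (i : Fin p) : truncPolyBasis k p i = tgen k p ^ (i : ℕ) := by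
  unfold truncPolyBasis
  erw [Module.Basis.reindex_apply, PowerBasis.coe_basis]
  rfl

end TruncPoly

theorem stmt13_general (k : Type*) [Field k] (p : ℕ)
    (τ : (TruncPoly k p) ⊗[k] (TruncPoly k p) →ₗ[k] (TruncPoly k p) ⊗[k] (TruncPoly k p))
    (σ : (TruncPoly k p) ⊗[k] (TruncPoly k p) →ₗ[k] (TruncPoly k p) ⊗[k] (TruncPoly k p))
    (hτ : ∀ r ℓ : ℕ, r < p → ℓ < p →
      τ (((tgen k p) ^ r) ⊗ₜ[k] ((tgen k p) ^ ℓ)) =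
        ∑ t ∈ Finset.range (r + 1),
          ((r.choose t : k) * (2 : k)⁻¹ ^ t * (ℓ.ascFactorial t : k)) •
            (((tgen k p) ^ (ℓ + t)) ⊗ₜ[k] ((tgen k p) ^ (r - t))))
    (hσ : ∀ ℓ r : ℕ, ℓ < p → r < p →
      σ (((tgen k p) ^ ℓ) ⊗ₜ[k] ((tgen k p) ^ r)) =
        ∑ t ∈ Finset.range (r + 1),
          ((r.choose t : k) * (-(2 : k)⁻¹) ^ t * (ℓ.ascFactorial t : k)) •
            (((tgen k p) ^ (r - t)) ⊗ₜ[k] ((tgen k p) ^ (ℓ + t)))) :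
    Function.Bijective τ ∧ σ.comp τ = LinearMap.id ∧ τ.comp σ = LinearMap.id := by
  let e := (truncPolyBasis k p).tensorProduct (truncPolyBasis k p)
  have he (i j : Fin p) : e (i, j) = (tgen k p ^ (i : ℕ)) ⊗ₜ (tgen k p ^ (j : ℕ)) := by
    simp only [e, Module.Basis.tensorProduct_apply, truncPolyBasis_apply]
  have hu i j (h : p ≤ j) : (tgen k p ^ i) ⊗ₜ[k] (tgen k p ^ j) = 0 := by
    rw [tgen_pow_eq_zero k p h, tmul_zero]
  have hw i j (h : p ≤ j) : (tgen k p ^ j) ⊗ₜ[k] (tgen k p ^ i) = 0 := by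
    rw [tgen_pow_eq_zero k p h, zero_tmul]
  have hστ : σ.comp τ = LinearMap.id := e.ext fun ⟨i, j⟩ => by
    rw [he]
    exact apply_apply_eq_self_of_eq_twist (add_neg_cancel _) hu hw hτ
      (fun r ℓ hr hℓ => hσ ℓ r hℓ hr) i.isLt j
  have hτσ : τ.comp σ = LinearMap.id := e.ext fun ⟨i, j⟩ => by
    rw [he]
    exact apply_apply_eq_self_of_eq_twist (neg_add_cancel _) hw hu
      (fun r ℓ hr hℓ => hσ ℓ r hℓ hr) hτ j.isLt i
  exact ⟨Function.bijective_iff_has_inverse.mpr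
    ⟨σ, LinearMap.congr_fun hστ, LinearMap.congr_fun hτσ⟩, hστ, hτσ⟩

/-- Let `A = k[x]/(x^p)`, `B = k[y]/(y^p)`.  A `k`-linear map
`τ : B ⊗ A → A ⊗ B` with `τ(y^r ⊗ x^ℓ) = ∑_t C(r,t)(1/2)^t [ℓ]^[t] x^{ℓ+t} ⊗ y^{r−t}`
on the monomial basis is bijective, with inverse given by
`x^ℓ ⊗ y^r ↦ ∑_t C(r,t)(−1/2)^t [ℓ]^[t] y^{r−t} ⊗ x^{ℓ+t}`. -/
theorem stmt13 (k : Type*) [Field k] (p : ℕ) (hp : p.Prime) (hp2 : 2 < p) [CharP k p]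
    (τ : (TruncPoly k p) ⊗[k] (TruncPoly k p) →ₗ[k] (TruncPoly k p) ⊗[k] (TruncPoly k p))
    (σ : (TruncPoly k p) ⊗[k] (TruncPoly k p) →ₗ[k] (TruncPoly k p) ⊗[k] (TruncPoly k p))
    (hτ : ∀ r ℓ : ℕ, r < p → ℓ < p →
      τ (((tgen k p) ^ r) ⊗ₜ[k] ((tgen k p) ^ ℓ)) =
        ∑ t ∈ Finset.range (r + 1),
          ((r.choose t : k) * (2 : k)⁻¹ ^ t * (ℓ.ascFactorial t : k)) •
            (((tgen k p) ^ (ℓ + t)) ⊗ₜ[k] ((tgen k p) ^ (r - t))))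
    (hσ : ∀ ℓ r : ℕ, ℓ < p → r < p →
      σ (((tgen k p) ^ ℓ) ⊗ₜ[k] ((tgen k p) ^ r)) =
        ∑ t ∈ Finset.range (r + 1),
          ((r.choose t : k) * (-(2 : k)⁻¹) ^ t * (ℓ.ascFactorial t : k)) •
            (((tgen k p) ^ (r - t)) ⊗ₜ[k] ((tgen k p) ^ (ℓ + t)))) :
    Function.Bijective τ ∧ σ.comp τ = LinearMap.id ∧ τ.comp σ = LinearMap.id :=
  stmt13_general k p τ σ hτ hσ
end

section
/- Let k be a field of characteristic p > 2, A = k[x]/(x^p), B = k[y]/(y^p). The k-linear map φ: A⊗B → A⊗B defined by φ(x^ℓ ⊗ y^r) = ∑_{t=0}^{r} C(r,t)(t!/2^t) x^{ℓ+t} ⊗ y^{r−t} is bijective, with inverse φ^{-1}(x^ℓ ⊗ y^r) = x^ℓ ⊗ y^r − (r/2) x^{ℓ+1} ⊗ y^{r−1}. -/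
open TensorProduct Polynomial

/-!
Let `D = (x/2) ∂_y`, a locally nilpotent operator on `A ⊗ B` with
`D (x^ℓ ⊗ y^r) = (r/2) x^{ℓ+1} ⊗ y^{r-1}`. Since `C(r,t) t! = r (r-1) ⋯ (r-t+1)`, the map `φ` is
`∑ₜ Dᵗ` and `ψ` is `1 - D`, so both composites telescope to the identity on the monomial tensors
`x^ℓ ⊗ y^r`, which span `A ⊗ B`.
-/

namespace TruncPoly

variable {k : Type*} [Field k] {p : ℕ}

lemma tgen_pow_eq_zero {m : ℕ} (h : p ≤ m) : tgen k p ^ m = 0 := by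
  rw [tgen, ← map_pow, Ideal.Quotient.eq_zero_iff_mem, Ideal.mem_span_singleton]
  exact pow_dvd_pow X h

lemma span_range_tgen_pow : Submodule.span k (Set.range (tgen k p ^ ·)) = ⊤ := by
  have hX : Submodule.span k (Set.range ((X : k[X]) ^ ·)) = ⊤ := by
    simpa [coe_basisMonomials, monomial_one_right_eq_X_pow] using (basisMonomials k).span_eq
  have hmk : (tgen k p ^ ·) = (Ideal.Quotient.mkₐ k _).toLinearMap ∘ ((X : k[X]) ^ ·) := by
    ext n; simp [tgen]
  rw [hmk, Set.range_comp, ← Submodule.map_span, hX, Submodule.map_top, LinearMap.range_eq_top]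
  exact Ideal.Quotient.mkₐ_surjective k _

lemma tensor_ext {q : ℕ} {M : Type*} [AddCommGroup M] [Module k M]
    {f g : TruncPoly k p ⊗[k] TruncPoly k q →ₗ[k] M}
    (h : ∀ ℓ r : ℕ, ℓ < p → r < q →
      f ((tgen k p ^ ℓ) ⊗ₜ (tgen k q ^ r)) = g ((tgen k p ^ ℓ) ⊗ₜ (tgen k q ^ r))) :
    f = g := by
  refine LinearMap.ext_on (s := Set.image2 (TensorProduct.mk k _ _ · ·)
    (Set.range (tgen k p ^ ·)) (Set.range (tgen k q ^ ·))) ?_ ?_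
  · rw [← Submodule.map₂_span_span, span_range_tgen_pow, span_range_tgen_pow,
      map₂_mk_top_top_eq_top]
  · rintro _ ⟨_, ⟨ℓ, rfl⟩, _, ⟨r, rfl⟩, rfl⟩
    rcases lt_or_ge ℓ p with hℓ | hℓ
    · rcases lt_or_ge r q with hr | hr
      · exact h ℓ r hℓ hr
      · simp [tgen_pow_eq_zero hr]
    · simp [tgen_pow_eq_zero hℓ]

end TruncPoly

open Finset

section Shift

variable (k : Type*) [Field k]

def shiftCoeff (r t : ℕ) : k := (r.choose t : k) * ((t.factorial : k) / 2 ^ t)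

variable {k}

lemma shiftCoeff_eq_descFactorial_div (r t : ℕ) : shiftCoeff k r t = (r.descFactorial t : k) / 2 ^ t := by
  rw [shiftCoeff, Nat.descFactorial_eq_factorial_mul_choose, Nat.cast_mul, mul_div_assoc',
    mul_comm]

@[simp] lemma shiftCoeff_zero_right (r : ℕ) : shiftCoeff k r 0 = 1 := by
  simp [shiftCoeff_eq_descFactorial_div]

@[simp] lemma shiftCoeff_succ_self (r : ℕ) : shiftCoeff k r (r + 1) = 0 := by
  simp [shiftCoeff_eq_descFactorial_div]

lemma shiftCoeff_succ_right (r t : ℕ) :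
    shiftCoeff k r (t + 1) = shiftCoeff k r t * ((r - t : ℕ) / 2) := by
  rw [shiftCoeff_eq_descFactorial_div, shiftCoeff_eq_descFactorial_div, Nat.descFactorial_succ, Nat.cast_mul, pow_succ,
    div_mul_div_comm, mul_comm ((r - t : ℕ) : k)]

lemma shiftCoeff_succ_succ (s t : ℕ) :
    shiftCoeff k (s + 1) (t + 1) = ((s + 1 : ℕ) / 2) * shiftCoeff k s t := by
  rw [shiftCoeff_eq_descFactorial_div, shiftCoeff_eq_descFactorial_div, Nat.succ_descFactorial_succ, Nat.cast_mul, pow_succ',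
    div_mul_div_comm]

variable {M : Type*} [AddCommGroup M] [Module k M]

/-- With `e ℓ r` playing `x^ℓ ⊗ y^r` and `D = (x/2) ∂_y`, `IsSumShift φ e N` says `φ = ∑ₜ Dᵗ` and
`IsHalfShift ψ e N` says `ψ = 1 - D`, on the `e ℓ r` with `r < N`. -/
def IsSumShift (φ : M →ₗ[k] M) (e : ℕ → ℕ → M) (N : ℕ) : Prop :=
  ∀ ℓ r, r < N → φ (e ℓ r) = ∑ t ∈ range (r + 1), shiftCoeff k r t • e (ℓ + t) (r - t)

def IsHalfShift (ψ : M →ₗ[k] M) (e : ℕ → ℕ → M) (N : ℕ) : Prop :=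
  ∀ ℓ r, r < N → ψ (e ℓ r) = e ℓ r - ((r : k) / 2) • e (ℓ + 1) (r - 1)

variable {φ ψ : M →ₗ[k] M} {e : ℕ → ℕ → M} {N : ℕ}

lemma IsSumShift.of_lt (he : ∀ ℓ r, N ≤ ℓ → e ℓ r = 0)
    (h : ∀ ℓ r, ℓ < N → r < N →
      φ (e ℓ r) = ∑ t ∈ range (r + 1), shiftCoeff k r t • e (ℓ + t) (r - t)) :
    IsSumShift φ e N := by
  intro ℓ r hr
  rcases lt_or_ge ℓ N with hℓ | hℓ
  · exact h ℓ r hℓ hr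
  · rw [he ℓ r hℓ, map_zero]
    exact (sum_eq_zero fun t _ => by rw [he _ _ (by omega), smul_zero]).symm

lemma IsHalfShift.of_lt (he : ∀ ℓ r, N ≤ ℓ → e ℓ r = 0)
    (h : ∀ ℓ r, ℓ < N → r < N → ψ (e ℓ r) = e ℓ r - ((r : k) / 2) • e (ℓ + 1) (r - 1)) :
    IsHalfShift ψ e N := by
  intro ℓ r hr
  rcases lt_or_ge ℓ N with hℓ | hℓ
  · exact h ℓ r hℓ hr
  · rw [he ℓ r hℓ, he _ _ (by omega), map_zero, smul_zero, sub_zero]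

lemma IsHalfShift.apply_apply_eq_self (hψ : IsHalfShift ψ e N) (hφ : IsSumShift φ e N)
    {ℓ r : ℕ} (hr : r < N) : ψ (φ (e ℓ r)) = e ℓ r := by
  set F : ℕ → M := fun t => shiftCoeff k r t • e (ℓ + t) (r - t) with hF
  have hstep : ∀ t ∈ range (r + 1), ψ (F t) = F t - F (t + 1) := by
    intro t _
    rw [hF, map_smul, hψ (ℓ + t) (r - t) (by omega), smul_sub, smul_smul,
      ← shiftCoeff_succ_right, add_assoc, Nat.sub_sub]
  calc ψ (φ (e ℓ r)) = ∑ t ∈ range (r + 1), (F t - F (t + 1)) := by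
        rw [hφ ℓ r hr, map_sum]; exact sum_congr rfl hstep
    _ = e ℓ r := by rw [sum_range_sub']; simp [hF]

lemma IsSumShift.apply_apply_eq_self (hφ : IsSumShift φ e N) (hψ : IsHalfShift ψ e N)
    {ℓ r : ℕ} (hr : r < N) : φ (ψ (e ℓ r)) = e ℓ r := by
  rw [hψ ℓ r hr, map_sub, map_smul]
  rcases r with _ | s
  · simp [hφ ℓ 0 hr]
  · rw [Nat.add_sub_cancel, hφ ℓ (s + 1) hr, hφ (ℓ + 1) s (by omega), sum_range_succ', smul_sum]
    have hterm : ∀ t ∈ range (s + 1),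
        shiftCoeff k (s + 1) (t + 1) • e (ℓ + (t + 1)) (s + 1 - (t + 1)) =
          ((s + 1 : ℕ) / 2 : k) • shiftCoeff k s t • e (ℓ + 1 + t) (s - t) := by
      intro t _
      rw [smul_smul, shiftCoeff_succ_succ, Nat.add_sub_add_right, add_comm t 1, add_assoc]
    rw [sum_congr rfl hterm]
    simp

end Shift

theorem stmt15_general (k : Type*) [Field k] (p : ℕ)
    (φ ψ : (TruncPoly k p) ⊗[k] (TruncPoly k p) →ₗ[k] (TruncPoly k p) ⊗[k] (TruncPoly k p))
    (hφ : ∀ ℓ r : ℕ, ℓ < p → r < p →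
      φ (((tgen k p) ^ ℓ) ⊗ₜ[k] ((tgen k p) ^ r)) =
        ∑ t ∈ Finset.range (r + 1),
          ((r.choose t : k) * ((t.factorial : k) / 2 ^ t)) •
            (((tgen k p) ^ (ℓ + t)) ⊗ₜ[k] ((tgen k p) ^ (r - t))))
    (hψ : ∀ ℓ r : ℕ, ℓ < p → r < p →
      ψ (((tgen k p) ^ ℓ) ⊗ₜ[k] ((tgen k p) ^ r)) =
        ((tgen k p) ^ ℓ) ⊗ₜ[k] ((tgen k p) ^ r) -
          ((r : k) / 2) • (((tgen k p) ^ (ℓ + 1)) ⊗ₜ[k] ((tgen k p) ^ (r - 1)))) :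
    Function.Bijective φ ∧ ψ.comp φ = LinearMap.id ∧ φ.comp ψ = LinearMap.id := by
  let e (ℓ r : ℕ) : TruncPoly k p ⊗[k] TruncPoly k p := (tgen k p ^ ℓ) ⊗ₜ (tgen k p ^ r)
  have he (ℓ r : ℕ) (hℓ : p ≤ ℓ) : e ℓ r = 0 := by
    simp only [e, TruncPoly.tgen_pow_eq_zero hℓ, zero_tmul]
  have hφe : IsSumShift φ e p := .of_lt he hφ
  have hψe : IsHalfShift ψ e p := .of_lt he hψ
  have hψφ : ψ.comp φ = LinearMap.id :=
    TruncPoly.tensor_ext fun _ _ _ hr => hψe.apply_apply_eq_self hφe hr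
  have hφψ : φ.comp ψ = LinearMap.id :=
    TruncPoly.tensor_ext fun _ _ _ hr => hφe.apply_apply_eq_self hψe hr
  exact ⟨Function.bijective_iff_has_inverse.mpr
    ⟨ψ, LinearMap.congr_fun hψφ, LinearMap.congr_fun hφψ⟩, hψφ, hφψ⟩

/-- The `k`-linear map `φ : A ⊗ B → A ⊗ B` with
`φ(x^ℓ ⊗ y^r) = ∑_t C(r,t)(t!/2^t) x^{ℓ+t} ⊗ y^{r−t}` is bijective, with inverse
`x^ℓ ⊗ y^r ↦ x^ℓ ⊗ y^r − (r/2) x^{ℓ+1} ⊗ y^{r−1}`. -/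
theorem stmt15 (k : Type*) [Field k] (p : ℕ) (hp : p.Prime) (hp2 : 2 < p) [CharP k p]
    (φ ψ : (TruncPoly k p) ⊗[k] (TruncPoly k p) →ₗ[k] (TruncPoly k p) ⊗[k] (TruncPoly k p))
    (hφ : ∀ ℓ r : ℕ, ℓ < p → r < p →
      φ (((tgen k p) ^ ℓ) ⊗ₜ[k] ((tgen k p) ^ r)) =
        ∑ t ∈ Finset.range (r + 1),
          ((r.choose t : k) * ((t.factorial : k) / 2 ^ t)) •
            (((tgen k p) ^ (ℓ + t)) ⊗ₜ[k] ((tgen k p) ^ (r - t))))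
    (hψ : ∀ ℓ r : ℕ, ℓ < p → r < p →
      ψ (((tgen k p) ^ ℓ) ⊗ₜ[k] ((tgen k p) ^ r)) =
        ((tgen k p) ^ ℓ) ⊗ₜ[k] ((tgen k p) ^ r) -
          ((r : k) / 2) • (((tgen k p) ^ (ℓ + 1)) ⊗ₜ[k] ((tgen k p) ^ (r - 1)))) :
    Function.Bijective φ ∧ ψ.comp φ = LinearMap.id ∧ φ.comp ψ = LinearMap.id :=
  stmt15_general k p φ ψ hφ hψ
end

section
/- Let k be a field of characteristic p > 2, q a positive multiple of p, and S = k⟨x,y⟩/(yx − xy − (1/2)x²). Let g act on S as the algebra automorphism determined by g·x = x, g·y = x + y. With α = −y^{p−2} + ∑_{i=1}^{p−2}(−1)^{i+1}((i+1)!/2^{i+1}) x^i y^{p−2−i}, one has ∑_{s=0}^{q−1} g^s·α = 0 in S. -/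
/-!
Since `g ^ s` fixes `x` and sends `y` to `y + s • x`, for every product `a` of at most `n` factors
`x`, `y` the orbit `s ↦ (g ^ s) a` is a polynomial in `s` of degree `≤ n` with coefficients in `S`.
The element `α` is a combination of such products with `n = p - 2`. Summing over `s < q` reduces
to the power sums `∑_{s<q} s^d` with `d < p - 1`; as `p ∣ q` these are multiples of
`∑_{t ∈ 𝔽_p} t^d = 0`.
-/

open Finset Polynomial

theorem ZMod.sum_range_mul_eq_nsmul {M : Type*} [AddCommMonoid M] (n m : ℕ) (f : ZMod n → M) :
    ∑ s ∈ range (n * m), f s = m • ∑ s ∈ range n, f s := by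
  induction m with
  | zero => simp
  | succ m ih => simp [Nat.mul_succ, sum_range_add, ih, succ_nsmul]

theorem ZMod.sum_range_natCast_pow_eq_zero {p : ℕ} [Fact p.Prime] {d : ℕ} (hd : d < p - 1) :
    ∑ s ∈ range p, (s : ZMod p) ^ d = 0 := by
  rw [← FiniteField.sum_pow_lt_card_sub_one (ZMod p) d (by rwa [ZMod.card])]
  exact sum_nbij' (fun s => (s : ZMod p)) ZMod.val (fun _ _ => mem_univ _)
    (fun a _ => mem_range.2 (ZMod.val_lt a)) (fun _ hs => ZMod.val_cast_of_lt (mem_range.1 hs))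
    (fun a _ => ZMod.natCast_zmod_val a) (fun _ _ => rfl)

theorem sum_range_natCast_pow_eq_zero {R : Type*} [Ring R] (p : ℕ) [Fact p.Prime] [CharP R p]
    {q d : ℕ} (hpq : p ∣ q) (hd : d < p - 1) : ∑ s ∈ range q, (s : R) ^ d = 0 := by
  obtain ⟨m, rfl⟩ := hpq
  have h := congrArg (ZMod.castHom (dvd_refl p) R) (ZMod.sum_range_mul_eq_nsmul p m (· ^ d))
  simpa [ZMod.sum_range_natCast_pow_eq_zero hd] using h

theorem Polynomial.eval_mul_at_natCast {R : Type*} [Semiring R] (P Q : R[X]) (n : ℕ) :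
    (P * Q).eval (n : R) = P.eval (n : R) * Q.eval (n : R) :=
  eval₂_mul_noncomm _ _ fun _ => Nat.cast_commute _ _ |>.symm

theorem Polynomial.sum_range_eval_natCast_eq_zero {k S : Type*} [CommRing k] [Semiring S]
    [Algebra k S] (p : ℕ) [Fact p.Prime] [CharP k p] {q : ℕ} (hpq : p ∣ q) (P : S[X])
    (hP : P.natDegree < p - 1) : ∑ s ∈ range q, P.eval (s : S) = 0 := by
  simp_rw [eval_eq_sum_range]
  rw [sum_comm]
  refine sum_eq_zero fun i hi => ?_
  have hi : i < p - 1 := by have := mem_range.1 hi; omega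
  have : ∑ s ∈ range q, (s : S) ^ i = algebraMap k S (∑ s ∈ range q, (s : k) ^ i) := by simp
  rw [← mul_sum, this, sum_range_natCast_pow_eq_zero p hpq hi, map_zero, mul_zero]

section OrbitDegree

variable {k S : Type*} [CommSemiring k] [Semiring S] [Algebra k S] (g : S ≃ₐ[k] S)

/-- The orbit polynomials have coefficients in the possibly noncommutative `S`; evaluation at the
central elements `(s : S)` is still multiplicative. -/
def orbitDegreeLE (n : ℕ) : Submodule k S where
  carrier := {a | ∃ P : S[X], P.natDegree ≤ n ∧ ∀ s : ℕ, (g ^ s) a = P.eval (s : S)}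
  zero_mem' := ⟨0, by simp⟩
  add_mem' := by
    rintro a b ⟨P, hP, hPa⟩ ⟨Q, hQ, hQb⟩
    exact ⟨P + Q, (natDegree_add_le _ _).trans (max_le hP hQ), fun s => by
      rw [map_add, hPa, hQb, eval_add]⟩
  smul_mem' := by
    rintro c a ⟨P, hP, hPa⟩
    exact ⟨c • P, (natDegree_smul_le _ _).trans hP, fun s => by
      rw [map_smul, hPa, eval_smul]⟩

variable {g}

theorem orbitDegreeLE_mono {m n : ℕ} (h : m ≤ n) : orbitDegreeLE g m ≤ orbitDegreeLE g n := by
  rintro a ⟨P, hP, hPa⟩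
  exact ⟨P, hP.trans h, hPa⟩

theorem mul_mem_orbitDegreeLE {m n : ℕ} {a b : S} (ha : a ∈ orbitDegreeLE g m)
    (hb : b ∈ orbitDegreeLE g n) : a * b ∈ orbitDegreeLE g (m + n) := by
  obtain ⟨P, hP, hPa⟩ := ha
  obtain ⟨Q, hQ, hQb⟩ := hb
  exact ⟨P * Q, natDegree_mul_le_of_le hP hQ, fun s => by
    rw [map_mul, hPa, hQb, eval_mul_at_natCast]⟩

theorem pow_mem_orbitDegreeLE {n : ℕ} {a : S} (ha : a ∈ orbitDegreeLE g n) (m : ℕ) :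
    a ^ m ∈ orbitDegreeLE g (m * n) := by
  induction m with
  | zero => exact ⟨1, by simp, fun s => by simp⟩
  | succ m ih => simpa [pow_succ, add_mul] using mul_mem_orbitDegreeLE ih ha

theorem mem_orbitDegreeLE_zero_of_fixed {a : S} (ha : g a = a) : a ∈ orbitDegreeLE g 0 :=
  ⟨C a, by simp, fun s => by simp [AlgEquiv.coe_pow, Function.iterate_fixed ha]⟩

theorem pow_apply_of_apply_eq_add {x y : S} (hgx : g x = x) (hgy : g y = x + y) (s : ℕ) :
    (g ^ s) y = y + s • x := by
  induction s with
  | zero => simp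
  | succ s ih =>
    rw [pow_succ', AlgEquiv.mul_apply, ih, map_add, map_nsmul, hgx, hgy, succ_nsmul]
    abel

theorem mem_orbitDegreeLE_one_of_apply_eq_add {x y : S} (hgx : g x = x) (hgy : g y = x + y) :
    y ∈ orbitDegreeLE g 1 :=
  ⟨C y + C x * X,
    (natDegree_add_le _ _).trans (max_le (by simp) ((natDegree_C_mul_le _ _).trans natDegree_X_le)),
    fun s => by simp [pow_apply_of_apply_eq_add hgx hgy, (Nat.cast_commute s x).eq]⟩

end OrbitDegree

theorem sum_range_pow_apply_eq_zero {k S : Type*} [CommRing k] [Semiring S] [Algebra k S]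
    {g : S ≃ₐ[k] S} {p : ℕ} [Fact p.Prime] [CharP k p] {q : ℕ}
    (hpq : p ∣ q) {n : ℕ} (hn : n < p - 1) {a : S} (ha : a ∈ orbitDegreeLE g n) :
    ∑ s ∈ range q, (g ^ s) a = 0 := by
  obtain ⟨P, hP, hPa⟩ := ha
  simp_rw [hPa]
  exact sum_range_eval_natCast_eq_zero (k := k) p hpq P (hP.trans_lt hn)

theorem stmt16_general (k : Type*) [Field k] (p : ℕ) (hp : p.Prime) [CharP k p]
    (q : ℕ) (hpq : p ∣ q)
    (S : Type*) [Ring S] [Algebra k S] (x y : S)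
    (g : S ≃ₐ[k] S) (hgx : g x = x) (hgy : g y = x + y) :
    ∑ s ∈ Finset.range q,
      (g ^ s) (-(y ^ (p - 2)) +
        ∑ i ∈ Finset.Icc 1 (p - 2),
          (((-1 : k) ^ (i + 1) * ((i + 1).factorial : k)) / 2 ^ (i + 1)) •
            (x ^ i * y ^ (p - 2 - i))) = 0 := by
  have : Fact p.Prime := ⟨hp⟩
  have hx := mem_orbitDegreeLE_zero_of_fixed hgx
  have hy := mem_orbitDegreeLE_one_of_apply_eq_add hgx hgy
  refine sum_range_pow_apply_eq_zero hpq (n := p - 2) (by have := hp.two_le; omega) ?_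
  refine add_mem (neg_mem ?_) (sum_mem fun i _ => Submodule.smul_mem _ _ ?_)
  · simpa using pow_mem_orbitDegreeLE hy (p - 2)
  · refine orbitDegreeLE_mono ?_
      (mul_mem_orbitDegreeLE (pow_mem_orbitDegreeLE hx i) (pow_mem_orbitDegreeLE hy (p - 2 - i)))
    omega

/-- With `g` the automorphism `x ↦ x`, `y ↦ x + y` of `S = k⟨x,y⟩/(yx − xy − (1/2)x²)`
and `q` a positive multiple of `p`: `∑_{s=0}^{q−1} g^s·α = 0`. -/
theorem stmt16 (k : Type*) [Field k] (p : ℕ) (hp : p.Prime) (hp2 : 2 < p) [CharP k p]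
    (q : ℕ) (hq : 0 < q) (hpq : p ∣ q)
    (S : Type*) [Ring S] [Algebra k S] (x y : S)
    (hrel : y * x = x * y + (2 : k)⁻¹ • x ^ 2)
    (g : S ≃ₐ[k] S) (hgx : g x = x) (hgy : g y = x + y) :
    ∑ s ∈ Finset.range q,
      (g ^ s) (-(y ^ (p - 2)) +
        ∑ i ∈ Finset.Icc 1 (p - 2),
          (((-1 : k) ^ (i + 1) * ((i + 1).factorial : k)) / 2 ^ (i + 1)) •
            (x ^ i * y ^ (p - 2 - i))) = 0 :=
  stmt16_general k p hp q hpq S x y g hgx hgy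
end
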